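/- arXiv:1103.1063 — 6 statements merged into one kernel-verified Lean document; each statement's English description precedes it below -/
import Mathlib

section
/- Let Γ be a countably infinite group and let κ and λ be standard probability spaces, each of whose measures is not a Dirac measure (i.e., the Bernoulli actions κ^Γ and λ^Γ are nontrivial, hence free). Then the Bernoulli actions κ^Γ and λ^Γ are weakly equivalent. -/
open MeasureTheory Filter Topology

/-- A probability-measure-preserving action of a group `Γ` on `(X, μ)`. -/
def IsPMPAction {Γ X : Type*} [Group Γ] [MeasurableSpace X]
    (f : Γ → X → X) (μ : Measure X) : Prop :=
  (∀ γ : Γ, MeasurePreserving (f γ) μ μ) ∧ (∀ x : X, f 1 x = x) ∧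
    (∀ γ₁ γ₂ : Γ, ∀ x : X, f (γ₁ * γ₂) x = f γ₁ (f γ₂ x))

/-- The action is (essentially) free. -/
def IsFreeAction {Γ X : Type*} [MeasurableSpace X]
    (f : Γ → X → X) (μ : Measure X) : Prop :=
  ∀ᵐ x ∂μ, ∀ γ γ' : Γ, γ ≠ γ' → f γ x ≠ f γ' x

/-- `f` (acting on `(X, μ)`) weakly contains `g` (acting on `(Y, ν)`). -/
def WeaklyContains {Γ X Y : Type*} [MeasurableSpace X] [MeasurableSpace Y]
    (f : Γ → X → X) (μ : Measure X) (g : Γ → Y → Y) (ν : Measure Y) : Prop :=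
  ∀ (n : ℕ) (Ys : Fin n → Set Y), (∀ i, MeasurableSet (Ys i)) →
    ∀ (S : Finset Γ) (ε : ℝ), 0 < ε →
      ∃ Xs : Fin n → Set X, (∀ i, MeasurableSet (Xs i)) ∧
        ∀ i j : Fin n, ∀ γ ∈ S,
          |(μ (f γ '' Xs i ∩ Xs j)).toReal - (ν (g γ '' Ys i ∩ Ys j)).toReal| < ε

/-- The (left) shift action of `Γ` on `Γ → κ`. -/
def bernoulliShift {Γ κ : Type*} [Group Γ] (γ : Γ) (ω : Γ → κ) : Γ → κ :=
  fun δ => ω (δ * γ)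

/-- `ν` is the product (Bernoulli) measure on `Γ → κ` with one-dimensional marginal `κm`:
it is a probability measure giving every cylinder set the product of the marginals. -/
def IsBernoulliMeasure {Γ κ : Type*} [MeasurableSpace κ]
    (κm : Measure κ) (ν : Measure (Γ → κ)) : Prop :=
  IsProbabilityMeasure ν ∧
    ∀ (F : Finset Γ) (B : Γ → Set κ), (∀ γ, MeasurableSet (B γ)) →
      ν {ω | ∀ γ ∈ F, ω γ ∈ B γ} = ∏ γ ∈ F, κm (B γ)

/-!
Since `κ` is not a point mass, the product measure `κ^ℕ` has no atoms, so after embedding `κ^ℕ`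
into `ℝ` its distribution function pushes it onto the uniform measure on `[0, 1]`, which in turn
maps onto `λ`: there is `ψ : κ^ℕ → λ` with `ψ_* κ^ℕ = λ`. Given a finite window `E ⊆ Γ`, choose
`w : ℕ → Γ` such that the translates `w k • E` are pairwise disjoint and set
`Φ x δ = ψ (k ↦ x (w k * δ))`. Then `Φ` commutes with the shifts, and its coordinates in `E` read
disjoint blocks of independent coordinates of `x`, so `Φ_* κ^Γ` and `λ^Γ` have the same marginal
on `E`. Approximating the given sets by cylinders over a finite set and taking `E` to contain
their translates by `S`, the preimages of the cylinders under `Φ` witness the weak containment.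
-/

open Set Function ProbabilityTheory MeasureTheory Measure
open scoped ENNReal symmDiff Pointwise unitInterval

theorem Set.inter_symmDiff_inter_subset {α : Type*} (A B A' B' : Set α) :
    (A ∩ B) ∆ (A' ∩ B') ⊆ A ∆ A' ∪ B ∆ B' := by
  intro x
  simp only [mem_symmDiff, mem_inter_iff, mem_union]
  tauto

theorem exists_injective_mul_finset {G : Type*} [Group G] [Infinite G] (E : Finset G) :
    ∃ w : ℕ → G, Injective fun p : E × ℕ ↦ w p.2 * p.1 := by
  classical
  let r : G → G → Prop := fun a b ↦ Disjoint (a • E) (b • E)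
  have : Std.Symm r := ⟨fun _ _ h ↦ h.symm⟩
  have hfresh (s : Finset G) : ∃ b, True ∧ ∀ a ∈ s, r a b := by
    obtain ⟨b, hb⟩ := Infinite.exists_notMem_finset (s * E * E⁻¹)
    refine ⟨b, trivial, fun a ha ↦ Finset.disjoint_left.2 fun x hxa hxb ↦ hb ?_⟩
    obtain ⟨d, hd, rfl⟩ := Finset.mem_smul_finset.1 hxa
    obtain ⟨d', hd', hdd'⟩ := Finset.mem_smul_finset.1 hxb
    rw [show b = a * d * d'⁻¹ by simp only [smul_eq_mul] at hdd'; rw [← hdd']; group]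
    exact Finset.mul_mem_mul (Finset.mul_mem_mul ha hd) (Finset.inv_mem_inv hd')
  obtain ⟨w, -, hw⟩ := exists_seq_of_forall_finset_exists' (fun _ ↦ True) r fun s _ ↦ hfresh s
  refine ⟨w, ?_⟩
  rintro ⟨δ, k⟩ ⟨δ', l⟩ h
  simp only at h
  obtain rfl | hkl := eq_or_ne k l
  · simpa using h
  · refine absurd (Finset.disjoint_left.1 (hw hkl) (Finset.smul_mem_smul_finset δ.2)) ?_
    simp [h]

theorem exists_measurableSet_measure_ne_zero_ne_one {X : Type*} [MeasurableSpace X]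
    [StandardBorelSpace X] {μ : Measure X} [IsProbabilityMeasure μ] (hμ : ∀ x, μ ≠ dirac x) :
    ∃ A, MeasurableSet A ∧ μ A ≠ 0 ∧ μ A ≠ 1 := by
  by_contra! h
  have : IsZeroOneMeasure μ := ⟨fun s hs ↦ or_iff_not_imp_left.2 (h s hs)⟩
  obtain ⟨x, hx⟩ := IsZeroOneMeasure.exists_eq_dirac (μ := μ)
  exact hμ x hx

theorem continuous_cdf (μ : Measure ℝ) [IsProbabilityMeasure μ] [NullSingletonClass μ] :
    Continuous (cdf μ) := by
  refine continuous_iff_continuousAt.2 fun a ↦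
    (monotone_cdf μ).continuousAt_iff_leftLim_eq_rightLim.2 ?_
  have h := (cdf μ).measure_singleton a
  rw [measure_cdf, measure_singleton, eq_comm, ENNReal.ofReal_eq_zero, sub_nonpos] at h
  rw [StieltjesFunction.rightLim_eq]
  exact le_antisymm ((monotone_cdf μ).leftLim_le le_rfl) h

theorem measure_cdf_le (μ : Measure ℝ) [IsProbabilityMeasure μ] [NullSingletonClass μ] {c : ℝ}
    (hc0 : 0 ≤ c) (hc1 : c ≤ 1) : μ {x | cdf μ x ≤ c} = ENNReal.ofReal c := by
  obtain rfl | hc1 := hc1.eq_or_lt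
  · simp [cdf_le_one]
  set s := {x | cdf μ x ≤ c}
  obtain hs | hs := s.eq_empty_or_nonempty
  · have : c ≤ 0 := ge_of_tendsto' (tendsto_cdf_atBot μ) fun x ↦
      le_of_not_ge fun hx ↦ (hs.subset hx : x ∈ (∅ : Set ℝ))
    rw [hs, le_antisymm this hc0, measure_empty, ENNReal.ofReal_zero]
  have hbdd : BddAbove s := by
    obtain ⟨b, hb⟩ :=
      ((tendsto_cdf_atTop μ).eventually (eventually_gt_nhds hc1)).exists_forall_of_atTop
    exact ⟨b, fun x hx ↦ le_of_not_gt fun hbx ↦ (hb x hbx.le).not_ge hx⟩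
  set a := sSup s
  have ha : cdf μ a ≤ c := (isClosed_le (continuous_cdf μ) continuous_const).csSup_mem hs hbdd
  have hsa : s = Iic a := Subset.antisymm (fun x hx ↦ le_csSup hbdd hx)
    fun x hx ↦ (monotone_cdf μ hx).trans ha
  have hca : cdf μ a = c := by
    refine le_antisymm ha (ge_of_tendsto ((continuous_cdf μ).tendsto a |>.mono_left
      (nhdsWithin_le_nhds (s := Ioi a))) (eventually_nhdsWithin_of_forall fun y hy ↦ ?_))
    exact le_of_not_ge fun hyc ↦ (mem_Ioi.1 hy).not_ge (le_csSup hbdd hyc)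
  rw [hsa, ← ofReal_cdf, hca]

noncomputable def cdfUnitInterval (μ : Measure ℝ) (x : ℝ) : I :=
  ⟨cdf μ x, cdf_nonneg μ x, cdf_le_one μ x⟩

@[fun_prop]
theorem measurable_cdfUnitInterval (μ : Measure ℝ) : Measurable (cdfUnitInterval μ) :=
  (monotone_cdf μ).measurable.subtype_mk

theorem map_cdfUnitInterval_eq_volume (μ : Measure ℝ) [IsProbabilityMeasure μ]
    [NullSingletonClass μ] : μ.map (cdfUnitInterval μ) = volume := by
  have := isProbabilityMeasure_map (μ := μ) (measurable_cdfUnitInterval μ).aemeasurable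
  refine ext_of_Iic _ _ fun c ↦ ?_
  rw [map_apply (measurable_cdfUnitInterval μ) measurableSet_Iic, unitInterval.volume_Iic]
  exact measure_cdf_le μ c.2.1 c.2.2

theorem exists_measurable_map_eq_of_nullSingletonClass {X Y : Type*} [MeasurableSpace X]
    [StandardBorelSpace X] [MeasurableSpace Y] [StandardBorelSpace Y] (μ : Measure X)
    [IsProbabilityMeasure μ] [NullSingletonClass μ] (ν : Measure Y) [IsProbabilityMeasure ν] :
    ∃ f : X → Y, Measurable f ∧ μ.map f = ν := by
  have := nonempty_of_isProbabilityMeasure ν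
  obtain ⟨g, hg, hgν⟩ := ν.exists_measurable_map_eq
  have he := measurableEmbedding_embeddingReal X
  set μℝ := μ.map (embeddingReal X)
  have : IsProbabilityMeasure μℝ := isProbabilityMeasure_map he.measurable.aemeasurable
  have : NullSingletonClass μℝ := ⟨fun x ↦ by
    rw [map_apply he.measurable (measurableSet_singleton x)]
    exact (subsingleton_singleton.preimage he.injective).measure_zero μ⟩
  refine ⟨g ∘ cdfUnitInterval μℝ ∘ embeddingReal X, by fun_prop, ?_⟩
  rw [← map_map hg (by fun_prop), ← map_map (by fun_prop) he.measurable,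
    map_cdfUnitInterval_eq_volume, hgν]

namespace MeasureTheory.Measure

variable {X : Type*} [MeasurableSpace X] (μ : Measure X) [IsProbabilityMeasure μ]

theorem infinitePi_map_comp_of_injective {ι ι' : Type*} {j : ι' → ι} (hj : Injective j) :
    (infinitePi fun _ : ι ↦ μ).map (fun x i ↦ x (j i)) = infinitePi fun _ : ι' ↦ μ := by
  let e : ι' ≃ range j := Equiv.ofInjective j hj
  have hcomp : (fun (x : ι → X) i ↦ x (j i)) =
      MeasurableEquiv.piCongrLeft (fun _ ↦ X) e.symm ∘ (range j).domRestrict := by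
    ext x i
    simp [MeasurableEquiv.piCongrLeft, Equiv.piCongrLeft_apply_eq_cast, e]
  rw [hcomp, ← map_map (by fun_prop) (by fun_prop), infinitePi_map_restrict',
    infinitePi_map_piCongrLeft (fun _ ↦ μ) e.symm]

theorem infinitePi_map_blocks {ι ι' K Y : Type*} [MeasurableSpace Y] {j : ι' × K → ι}
    (hj : Injective j) {ψ : (K → X) → Y} (hψ : Measurable ψ) :
    (infinitePi fun _ : ι ↦ μ).map (fun x i ↦ ψ fun k ↦ x (j (i, k))) =
      infinitePi fun _ : ι' ↦ (infinitePi fun _ : K ↦ μ).map ψ := by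
  have hcomp : (fun (x : ι → X) i ↦ ψ fun k ↦ x (j (i, k))) =
      (fun y i ↦ ψ (y i)) ∘ MeasurableEquiv.curry ι' K X ∘ fun x p ↦ x (j p) := rfl
  rw [hcomp, ← map_map (by fun_prop) (by fun_prop), ← map_map (by fun_prop) (by fun_prop),
    infinitePi_map_comp_of_injective μ hj, infinitePi_map_curry (fun _ _ ↦ μ),
    infinitePi_map_pi _ fun _ ↦ hψ]

end MeasureTheory.Measure

theorem nullSingletonClass_infinitePi_nat {X : Type*} [MeasurableSpace X] {μ : Measure X}
    [IsProbabilityMeasure μ] {A : Set X} (hA : MeasurableSet A) (h0 : μ A ≠ 0) (h1 : μ A ≠ 1) :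
    NullSingletonClass (infinitePi fun _ : ℕ ↦ μ) := by
  classical
  set r := max (μ A) (μ Aᶜ)
  have hr : r < 1 := by
    refine max_lt (prob_le_one.lt_of_ne h1) ?_
    rw [prob_compl_eq_one_sub hA]
    exact ENNReal.sub_lt_self ENNReal.one_ne_top one_ne_zero h0
  refine ⟨fun x ↦ le_antisymm (ge_of_tendsto' (ENNReal.tendsto_pow_atTop_nhds_zero_of_lt_one hr)
    fun k ↦ ?_) zero_le⟩
  let B n := if x n ∈ A then A else Aᶜ
  calc infinitePi (fun _ ↦ μ) {x}
      ≤ infinitePi (fun _ ↦ μ) (Set.pi (Finset.range k) B) := by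
        refine measure_mono (singleton_subset_iff.2 fun n _ ↦ ?_)
        by_cases hn : x n ∈ A <;> simp [B, hn]
    _ = ∏ n ∈ Finset.range k, μ (B n) :=
        infinitePi_pi _ fun n _ ↦ by by_cases hn : x n ∈ A <;> simp [B, hn, hA, hA.compl]
    _ ≤ ∏ _n ∈ Finset.range k, r :=
        Finset.prod_le_prod' fun n _ ↦ by by_cases hn : x n ∈ A <;> simp [B, hn, r]
    _ = r ^ k := by simp

theorem exists_measurable_map_infinitePi_eq {X Y : Type*} [MeasurableSpace X]
    [StandardBorelSpace X] [MeasurableSpace Y] [StandardBorelSpace Y] {μ : Measure X}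
    [IsProbabilityMeasure μ] (hμ : ∀ x, μ ≠ dirac x) (ν : Measure Y) [IsProbabilityMeasure ν] :
    ∃ ψ : (ℕ → X) → Y, Measurable ψ ∧ (infinitePi fun _ ↦ μ).map ψ = ν := by
  obtain ⟨A, hA, h0, h1⟩ := exists_measurableSet_measure_ne_zero_ne_one hμ
  have := nullSingletonClass_infinitePi_nat hA h0 h1
  exact exists_measurable_map_eq_of_nullSingletonClass _ ν

section DependsOn

variable {ι : Type*} {X : ι → Type*}

theorem dependsOn_mem_cylinder (s : Finset ι) (S : Set (∀ i : s, X i)) :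
    DependsOn (· ∈ cylinder s S) s :=
  fun _ _ h ↦ congrArg (· ∈ S) (Finset.dependsOn_restrict s h)

theorem DependsOn.mem_inter {U V : Set (∀ i, X i)} {s : Set ι} (hU : DependsOn (· ∈ U) s)
    (hV : DependsOn (· ∈ V) s) : DependsOn (· ∈ U ∩ V) s :=
  fun _ _ h ↦ congrArg₂ And (hU h) (hV h)

variable [∀ i, MeasurableSpace (X i)]

theorem measure_eq_of_map_restrict_eq {μ ν : Measure (∀ i, X i)} {s : Finset ι}
    (h : μ.map s.restrict = ν.map s.restrict) {U : Set (∀ i, X i)} (hU : MeasurableSet U)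
    (hUs : DependsOn (· ∈ U) s) : μ U = ν U := by
  classical
  obtain rfl | ⟨x₀, -⟩ := U.eq_empty_or_nonempty
  · simp
  have hU_eq : U = s.restrict ⁻¹' (updateFinset x₀ s ⁻¹' U) := by
    ext x
    refine (eq_iff_iff.1 (hUs fun i hi ↦ ?_))
    simpa using congrFun (restrict_updateFinset x₀ (s.restrict x)).symm ⟨i, hi⟩
  have hU' : MeasurableSet (updateFinset x₀ s ⁻¹' U) := measurable_updateFinset hU
  rw [hU_eq, ← map_apply (Finset.measurable_restrict s) hU', h,
    map_apply (Finset.measurable_restrict s) hU']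

theorem exists_finset_dependsOn_approx (μ : Measure (∀ i, X i)) [IsFiniteMeasure μ] {n : ℕ}
    {Y : Fin n → Set (∀ i, X i)} (hY : ∀ k, MeasurableSet (Y k)) {ε : ℝ} (hε : 0 < ε) :
    ∃ (s : Finset ι) (Z : Fin n → Set (∀ i, X i)), ∀ k, MeasurableSet (Z k) ∧
      DependsOn (· ∈ Z k) s ∧ μ (Y k ∆ Z k) < ENNReal.ofReal ε := by
  classical
  have hdense : μ.MeasureDense (measurableCylinders X) :=
    .of_generateFrom_isSetAlgebra_finite μ isSetAlgebra_measurableCylinders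
      generateFrom_measurableCylinders.symm
  choose Z hZ hZY using fun k ↦ hdense.approx (Y k) (hY k) (measure_ne_top μ _) ε hε
  choose t S hS hZS using fun k ↦ (mem_measurableCylinders (Z k)).1 (hZ k)
  refine ⟨Finset.univ.biUnion t, Z, fun k ↦ ⟨hdense.measurable _ (hZ k), ?_, hZY k⟩⟩
  rw [hZS k]
  exact (dependsOn_mem_cylinder _ _).mono
    (Finset.coe_subset.2 (Finset.subset_biUnion_of_mem t (Finset.mem_univ k)))

end DependsOn

section Shift

variable {Γ X : Type*} [Group Γ]

theorem bernoulliShift_bernoulliShift (γ γ' : Γ) (x : Γ → X) :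
    bernoulliShift γ (bernoulliShift γ' x) = bernoulliShift (γ * γ') x := by
  ext δ
  simp [bernoulliShift, mul_assoc]

theorem bernoulliShift_one (x : Γ → X) : bernoulliShift 1 x = x := by
  ext δ
  simp [bernoulliShift]

theorem image_bernoulliShift (γ : Γ) (s : Set (Γ → X)) :
    bernoulliShift γ '' s = bernoulliShift γ⁻¹ ⁻¹' s :=
  congrFun (image_eq_preimage_of_inverse
    (fun x ↦ by rw [bernoulliShift_bernoulliShift, inv_mul_cancel, bernoulliShift_one])
    (fun x ↦ by rw [bernoulliShift_bernoulliShift, mul_inv_cancel, bernoulliShift_one])) s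

theorem DependsOn.mem_image_bernoulliShift {U : Set (Γ → X)} {s : Set Γ}
    (hU : DependsOn (· ∈ U) s) (γ : Γ) :
    DependsOn (· ∈ bernoulliShift γ '' U) ((· * γ⁻¹) '' s) := fun _ _ h ↦ by
  simp only [image_bernoulliShift, mem_preimage]
  exact hU fun δ hδ ↦ h (δ * γ⁻¹) (mem_image_of_mem _ hδ)

theorem image_bernoulliShift_preimage {Y : Type*} {Φ : (Γ → X) → Γ → Y}
    (hΦ : ∀ γ x, Φ (bernoulliShift γ x) = bernoulliShift γ (Φ x)) (γ : Γ) (Z : Set (Γ → Y)) :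
    bernoulliShift γ '' (Φ ⁻¹' Z) = Φ ⁻¹' (bernoulliShift γ '' Z) := by
  simp only [image_bernoulliShift, ← preimage_comp]
  rw [show Φ ∘ bernoulliShift γ⁻¹ = bernoulliShift γ⁻¹ ∘ Φ from funext (hΦ γ⁻¹)]

variable [MeasurableSpace X]

@[fun_prop]
theorem measurable_bernoulliShift (γ : Γ) : Measurable (bernoulliShift (κ := X) γ) := by
  unfold bernoulliShift
  fun_prop

theorem MeasurableSet.image_bernoulliShift {s : Set (Γ → X)} (hs : MeasurableSet s) (γ : Γ) :
    MeasurableSet (bernoulliShift γ '' s) := by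
  rw [_root_.image_bernoulliShift]
  exact measurable_bernoulliShift γ⁻¹ hs

theorem measurePreserving_bernoulliShift (μ : Measure X) [IsProbabilityMeasure μ] (γ : Γ) :
    MeasurePreserving (bernoulliShift γ) (infinitePi fun _ ↦ μ) (infinitePi fun _ ↦ μ) :=
  ⟨measurable_bernoulliShift γ, infinitePi_map_comp_of_injective μ (mul_left_injective γ)⟩

theorem measure_image_bernoulliShift_inter_symmDiff_le {ρ : Measure (Γ → X)}
    (hρ : ∀ γ, MeasurePreserving (bernoulliShift γ) ρ ρ) (γ : Γ) {A A' : Set (Γ → X)}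
    (hA : MeasurableSet A) (hA' : MeasurableSet A') (B B' : Set (Γ → X)) :
    ρ ((bernoulliShift γ '' A ∩ B) ∆ (bernoulliShift γ '' A' ∩ B')) ≤ ρ (A ∆ A') + ρ (B ∆ B') :=
  calc _ ≤ ρ ((bernoulliShift γ '' A) ∆ (bernoulliShift γ '' A')) + ρ (B ∆ B') :=
        (measure_mono (inter_symmDiff_inter_subset _ _ _ _)).trans (measure_union_le _ _)
    _ = ρ (A ∆ A') + ρ (B ∆ B') := by
        rw [image_bernoulliShift, image_bernoulliShift, ← preimage_symmDiff,
          (hρ γ⁻¹).measure_preimage (hA.symmDiff hA').nullMeasurableSet]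

end Shift

theorem weaklyContains_bernoulliShift_of_forall_finset {Γ X Y : Type*} [Group Γ]
    [MeasurableSpace X] [MeasurableSpace Y] (μ : Measure (Γ → X)) (ρ : Measure (Γ → Y))
    [IsFiniteMeasure ρ] (hρ : ∀ γ, MeasurePreserving (bernoulliShift γ) ρ ρ)
    (h : ∀ E : Finset Γ, ∃ Φ : (Γ → X) → Γ → Y, Measurable Φ ∧
      (∀ γ x, Φ (bernoulliShift γ x) = bernoulliShift γ (Φ x)) ∧
      (μ.map Φ).map E.restrict = ρ.map E.restrict) :
    WeaklyContains bernoulliShift μ bernoulliShift ρ := by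
  classical
  intro n B hB S ε hε
  obtain ⟨s, Z, hZ⟩ := exists_finset_dependsOn_approx ρ hB (half_pos hε)
  choose hZ hZs hBZ using hZ
  set E := s ∪ S.biUnion fun γ ↦ s.image (· * γ⁻¹)
  obtain ⟨Φ, hΦ, hΦγ, hΦE⟩ := h E
  refine ⟨fun k ↦ Φ ⁻¹' Z k, fun k ↦ hΦ (hZ k), fun k l γ hγ ↦ ?_⟩
  set T := bernoulliShift γ '' Z k ∩ Z l
  have hT : MeasurableSet T := ((hZ k).image_bernoulliShift γ).inter (hZ l)
  have hTE : DependsOn (· ∈ T) E := by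
    refine (((hZs k).mem_image_bernoulliShift γ).mono ?_).mem_inter ((hZs l).mono (by simp [E]))
    intro δ hδ
    simp only [E, Finset.coe_union, Finset.coe_biUnion, Finset.coe_image]
    exact Or.inr (mem_biUnion hγ hδ)
  have hμT : μ (bernoulliShift γ '' (Φ ⁻¹' Z k) ∩ Φ ⁻¹' Z l) = ρ T := by
    rw [image_bernoulliShift_preimage hΦγ, ← preimage_inter, ← map_apply hΦ hT]
    exact measure_eq_of_map_restrict_eq hΦE hT hTE
  have hclose : ρ ((bernoulliShift γ '' B k ∩ B l) ∆ T) < ENNReal.ofReal ε := calc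
    _ ≤ ρ (B k ∆ Z k) + ρ (B l ∆ Z l) :=
      measure_image_bernoulliShift_inter_symmDiff_le hρ γ (hB k) (hZ k) _ _
    _ < ENNReal.ofReal (ε / 2) + ENNReal.ofReal (ε / 2) := ENNReal.add_lt_add (hBZ k) (hBZ l)
    _ = ENNReal.ofReal ε := by
      rw [← ENNReal.ofReal_add (half_pos hε).le (half_pos hε).le, add_halves]
  change |μ.real _ - ρ.real _| < ε
  rw [measureReal_def, hμT, ← measureReal_def, abs_sub_comm]
  exact (abs_measureReal_sub_le_measureReal_symmDiff
    (((hB k).image_bernoulliShift γ).inter (hB l)).nullMeasurableSet hT.nullMeasurableSet).trans_lt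
    ((ENNReal.lt_ofReal_iff_toReal_lt (measure_ne_top _ _)).1 hclose)

theorem exists_equivariant_map_restrict_eq {Γ X Y : Type*} [Group Γ] [Infinite Γ]
    [MeasurableSpace X] [StandardBorelSpace X] [MeasurableSpace Y] [StandardBorelSpace Y]
    {μ : Measure X} [IsProbabilityMeasure μ] (hμ : ∀ x, μ ≠ dirac x) (ν : Measure Y)
    [IsProbabilityMeasure ν] (E : Finset Γ) :
    ∃ Φ : (Γ → X) → Γ → Y, Measurable Φ ∧
      (∀ γ x, Φ (bernoulliShift γ x) = bernoulliShift γ (Φ x)) ∧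
      ((infinitePi fun _ ↦ μ).map Φ).map E.restrict = (infinitePi fun _ ↦ ν).map E.restrict := by
  obtain ⟨ψ, hψ, hψν⟩ := exists_measurable_map_infinitePi_eq hμ ν
  obtain ⟨w, hw⟩ := exists_injective_mul_finset E
  refine ⟨fun x δ ↦ ψ fun k ↦ x (w k * δ), by fun_prop, fun γ x ↦ ?_, ?_⟩
  · ext δ
    simp [bernoulliShift, mul_assoc]
  · rw [map_map (Finset.measurable_restrict E) (by fun_prop), infinitePi_map_restrict,
      ← infinitePi_eq_pi, ← hψν]
    exact infinitePi_map_blocks μ hw hψ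

theorem IsBernoulliMeasure.eq_infinitePi {Γ X : Type*} [MeasurableSpace X] {μ : Measure X}
    [IsProbabilityMeasure μ] {ν : Measure (Γ → X)} (hν : IsBernoulliMeasure μ ν) :
    ν = infinitePi fun _ ↦ μ :=
  Measure.eq_infinitePi _ hν.2

theorem weaklyContains_infinitePi {Γ X Y : Type*} [Group Γ] [Infinite Γ]
    [MeasurableSpace X] [StandardBorelSpace X] [MeasurableSpace Y] [StandardBorelSpace Y]
    {μ : Measure X} [IsProbabilityMeasure μ] (hμ : ∀ x, μ ≠ dirac x) (ν : Measure Y)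
    [IsProbabilityMeasure ν] :
    WeaklyContains bernoulliShift (infinitePi fun _ : Γ ↦ μ)
      bernoulliShift (infinitePi fun _ : Γ ↦ ν) :=
  weaklyContains_bernoulliShift_of_forall_finset _ _ (measurePreserving_bernoulliShift ν)
    (exists_equivariant_map_restrict_eq hμ ν)

theorem bernoulli_actions_weakly_equivalent_general
    {Γ : Type*} [Group Γ] [Infinite Γ]
    {κ : Type*} [MeasurableSpace κ] [StandardBorelSpace κ]
    (κm : Measure κ) [IsProbabilityMeasure κm] (hκ : ∀ a : κ, κm ≠ Measure.dirac a)
    {lam : Type*} [MeasurableSpace lam] [StandardBorelSpace lam]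
    (lamm : Measure lam) [IsProbabilityMeasure lamm] (hlam : ∀ a : lam, lamm ≠ Measure.dirac a)
    (ν : Measure (Γ → κ)) (hν : IsBernoulliMeasure κm ν)
    (ρ : Measure (Γ → lam)) (hρ : IsBernoulliMeasure lamm ρ) :
    WeaklyContains (bernoulliShift (κ := κ)) ν (bernoulliShift (κ := lam)) ρ ∧
      WeaklyContains (bernoulliShift (κ := lam)) ρ (bernoulliShift (κ := κ)) ν := by
  rw [hν.eq_infinitePi, hρ.eq_infinitePi]
  exact ⟨weaklyContains_infinitePi hκ lamm, weaklyContains_infinitePi hlam κm⟩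

/-- Any two nontrivial Bernoulli actions of a countably infinite group are weakly
equivalent. -/
theorem bernoulli_actions_weakly_equivalent
    {Γ : Type*} [Group Γ] [Countable Γ] [Infinite Γ]
    {κ : Type*} [MeasurableSpace κ] [StandardBorelSpace κ]
    (κm : Measure κ) [IsProbabilityMeasure κm] (hκ : ∀ a : κ, κm ≠ Measure.dirac a)
    {lam : Type*} [MeasurableSpace lam] [StandardBorelSpace lam]
    (lamm : Measure lam) [IsProbabilityMeasure lamm] (hlam : ∀ a : lam, lamm ≠ Measure.dirac a)
    (ν : Measure (Γ → κ)) (hν : IsBernoulliMeasure κm ν)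
    (ρ : Measure (Γ → lam)) (hρ : IsBernoulliMeasure lamm ρ) :
    WeaklyContains (bernoulliShift (κ := κ)) ν (bernoulliShift (κ := lam)) ρ ∧
      WeaklyContains (bernoulliShift (κ := lam)) ρ (bernoulliShift (κ := κ)) ν :=
  bernoulli_actions_weakly_equivalent_general κm hκ lamm hlam ν hν ρ hρ
end

section
/- Every free p.m.p. action of ℤ on a standard Borel probability space weakly contains, for every integer n > 0, the cyclic action of ℤ on n points with uniform measure (ℤ acting on ℤ/nℤ by translation). -/
open MeasureTheory Filter Topology

/-- A p.m.p. action of the additive group `ℤ`. -/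
def IsPMPActionZ {X : Type*} [MeasurableSpace X] (f : ℤ → X → X) (μ : Measure X) : Prop :=
  (∀ m : ℤ, MeasurePreserving (f m) μ μ) ∧ (∀ x : X, f 0 x = x) ∧
    (∀ m m' : ℤ, ∀ x : X, f (m + m') x = f m (f m' x))

instance (n : ℕ) : MeasurableSpace (ZMod n) := ⊤

/-!
Choose a measurable marker set `A` whose points on any orbit are at least `N` apart, but which
meets almost every orbit segment of length `2N - 1`. It is obtained by greedily merging a countable
family of such sets, which exists because the action is free and `X` has a countable separating
family of measurable sets. Labelling each point by the time since its last visit to `A`, reduced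
mod `n`, gives a map `ℓ : X → ZMod n` that intertwines the action with translation except on the
points that come within `R` steps of `A`, a set of measure `O(R / N)`. Translation by `1` moves
each fibre of such an almost equivariant map into the next one up to this defect, so the fibres
are almost uniformly distributed, and the preimages `ℓ ⁻¹' Yᵢ` witness the weak containment.
-/

open scoped ENNReal

section FiniteValued

variable {X α : Type*} [MeasurableSpace X] {μ : Measure X}

lemma abs_measureReal_sub_le_of_diff_eq [IsFiniteMeasure μ] {s t u : Set X}
    (h : s \ u = t \ u) : |μ.real s - μ.real t| ≤ μ.real u := by
  have key : ∀ {s t : Set X}, s \ u = t \ u → μ.real s ≤ μ.real u + μ.real t := fun h =>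
    (measureReal_mono (Set.sdiff_subset_iff.1 (h ▸ Set.sdiff_subset))).trans
      (measureReal_union_le _ _)
  rw [abs_sub_le_iff]
  constructor <;> linarith [key h, key h.symm]

lemma abs_measureReal_preimage_sub_le [Fintype α] [MeasurableSpace α]
    [MeasurableSingletonClass α] {ν : Measure α} [IsFiniteMeasure μ] [IsFiniteMeasure ν]
    {ℓ : X → α} (hℓ : Measurable ℓ) {η : ℝ}
    (h : ∀ k, |μ.real (ℓ ⁻¹' {k}) - ν.real {k}| ≤ η) (D : Set α) :
    |μ.real (ℓ ⁻¹' D) - ν.real D| ≤ Fintype.card α * η := by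
  classical
  rw [← D.coe_toFinset, ← sum_measureReal_preimage_singleton _
    (fun k _ => hℓ (measurableSet_singleton k)), ← sum_measureReal_singleton,
    ← Finset.sum_sub_distrib]
  calc _ ≤ ∑ k ∈ D.toFinset, |μ.real (ℓ ⁻¹' {k}) - ν.real {k}| := Finset.abs_sum_le_sum_abs _ _
    _ ≤ ∑ k, |μ.real (ℓ ⁻¹' {k}) - ν.real {k}| :=
        Finset.sum_le_sum_of_subset_of_nonneg (Finset.subset_univ _) fun _ _ _ => abs_nonneg _
    _ ≤ ∑ _k : α, η := Finset.sum_le_sum fun k _ => h k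
    _ = Fintype.card α * η := by simp

end FiniteValued

lemma measurable_sInf_setOf_nat {X : Type*} [MeasurableSpace X] {p : X → ℕ → Prop}
    (hp : ∀ m, MeasurableSet {x | p x m}) : Measurable fun x => sInf {m | p x m} := by
  refine measurable_to_countable' fun k => ?_
  have : (fun x => sInf {m | p x m}) ⁻¹' {k} =
      {x | p x k ∧ ∀ t < k, ¬p x t} ∪ {x | k = 0 ∧ ∀ t, ¬p x t} := by
    ext x
    simp only [Set.mem_preimage, Set.mem_singleton_iff, Set.mem_union, Set.mem_ofPred_eq]
    constructor
    · rintro rfl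
      by_cases h : ∃ m, p x m
      · exact Or.inl ⟨Nat.sInf_mem h, fun t ht => Nat.notMem_of_lt_sInf ht⟩
      · push Not at h
        exact Or.inr ⟨by simp [h], h⟩
    · rintro (⟨hk, hmin⟩ | ⟨rfl, h⟩)
      · exact le_antisymm (Nat.sInf_le hk)
          (le_csInf ⟨k, hk⟩ fun t ht => not_lt.1 fun hlt => hmin t hlt ht)
      · simp [h]
  rw [this]
  measurability

instance (n : ℕ) : DiscreteMeasurableSpace (ZMod n) := ⟨fun _ => MeasurableSpace.measurableSet_top⟩

section Equidistribution

variable {X : Type*} [MeasurableSpace X] [AddAction ℤ X] {μ : Measure X}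
  [VAddInvariantMeasure ℤ X μ] {n : ℕ}

def equivarianceDefect (ℓ : X → ZMod n) (γ : ℤ) : Set X := {x | ℓ (γ +ᵥ x) ≠ ℓ x + γ}

lemma measureReal_preimage_vadd (γ : ℤ) (s : Set X) :
    μ.real ((γ +ᵥ ·) ⁻¹' s) = μ.real s := by
  rw [measureReal_def, measure_preimage_vadd, measureReal_def]

lemma measureReal_preimage_singleton_le_add [IsFiniteMeasure μ] (ℓ : X → ZMod n) (k : ZMod n)
    (j : ℕ) :
    μ.real (ℓ ⁻¹' {k}) ≤ μ.real (ℓ ⁻¹' {k + j}) + j * μ.real (equivarianceDefect ℓ 1) := by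
  induction j with
  | zero => simp
  | succ j ih =>
    have hstep : ℓ ⁻¹' {k + j} ⊆
        ((1 : ℤ) +ᵥ ·) ⁻¹' (ℓ ⁻¹' {k + (j + 1 : ℕ)}) ∪ equivarianceDefect ℓ 1 := by
      intro x hx
      by_cases hd : x ∈ equivarianceDefect ℓ 1
      · exact Or.inr hd
      · left
        simp only [equivarianceDefect, Set.mem_ofPred_eq, not_not, Int.cast_one] at hd
        simp only [Set.mem_preimage, Set.mem_singleton_iff] at hx ⊢
        rw [hd, hx]
        push_cast
        ring
    have := (measureReal_mono (μ := μ) hstep).trans (measureReal_union_le _ _)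
    rw [measureReal_preimage_vadd] at this
    push_cast at this ⊢
    linarith

lemma abs_measureReal_preimage_singleton_sub_inv_le [IsProbabilityMeasure μ] [NeZero n]
    {ℓ : X → ZMod n} (hℓ : Measurable ℓ) {δ : ℝ} (hδ : μ.real (equivarianceDefect ℓ 1) ≤ δ)
    (k : ZMod n) :
    |μ.real (ℓ ⁻¹' {k}) - (n : ℝ)⁻¹| ≤ n * δ := by
  have hn : (0 : ℝ) < n := by exact_mod_cast Nat.pos_of_neZero n
  have hfiber : ∀ y z, μ.real (ℓ ⁻¹' {y}) ≤ μ.real (ℓ ⁻¹' {z}) + n * δ := by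
    intro y z
    have h := measureReal_preimage_singleton_le_add (μ := μ) ℓ y (z - y).val
    rw [ZMod.natCast_zmod_val, add_sub_cancel] at h
    have hval : ((z - y).val : ℝ) ≤ n := by exact_mod_cast (ZMod.val_lt (z - y)).le
    have := measureReal_nonneg (μ := μ) (s := equivarianceDefect ℓ 1)
    nlinarith
  have total : ∑ y, μ.real (ℓ ⁻¹' {y}) = 1 := by
    rw [sum_measureReal_preimage_singleton _ fun y _ => hℓ (measurableSet_singleton y)]
    simp
  have upper := Finset.sum_le_sum fun y (_ : y ∈ Finset.univ) => hfiber k y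
  have lower := Finset.sum_le_sum fun y (_ : y ∈ Finset.univ) => hfiber y k
  simp only [Finset.sum_add_distrib, Finset.sum_const, Finset.card_univ, ZMod.card,
    nsmul_eq_mul, total] at upper lower
  have cancel : ∀ a b : ℝ, n * a ≤ n * b → a ≤ b := fun a b h => le_of_mul_le_mul_left h hn
  rw [abs_sub_le_iff, sub_le_iff_le_add, sub_le_iff_le_add]
  constructor <;> apply cancel <;> rw [mul_add, mul_inv_cancel₀ hn.ne'] <;> linarith

end Equidistribution

section WeakContainment

lemma measureReal_inv_smul_count_singleton {n : ℕ} (k : ZMod n) :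
    ((n : ℝ≥0∞)⁻¹ • Measure.count : Measure (ZMod n)).real {k} = (n : ℝ)⁻¹ := by
  simp [measureReal_def]

variable {X : Type*} [MeasurableSpace X] [AddAction ℤ X] {μ : Measure X}
  [VAddInvariantMeasure ℤ X μ] [IsProbabilityMeasure μ] {n : ℕ} [NeZero n]

theorem weaklyContains_zmod_of_forall_exists_equivarianceDefect_le
    (h : ∀ (R : ℕ) (δ : ℝ), 0 < δ → ∃ ℓ : X → ZMod n, Measurable ℓ ∧
      ∀ γ : ℤ, γ.natAbs ≤ R → μ.real (equivarianceDefect ℓ γ) ≤ δ) :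
    WeaklyContains (fun (m : ℤ) (x : X) => m +ᵥ x) μ
      (fun (m : ℤ) (y : ZMod n) => y + (m : ZMod n)) ((n : ℝ≥0∞)⁻¹ • Measure.count) := by
  intro k Ys _ S ε hε
  set ν : Measure (ZMod n) := (n : ℝ≥0∞)⁻¹ • Measure.count
  have : IsFiniteMeasure ν := ⟨by simp [ν, ENNReal.mul_lt_top_iff, Nat.pos_of_neZero n]⟩
  set δ := ε / (n ^ 2 + 2)
  obtain ⟨ℓ, hℓ, hdefect⟩ := h (S.sup Int.natAbs + 1) δ (by positivity)
  have hfiber : ∀ y, |μ.real (ℓ ⁻¹' {y}) - ν.real {y}| ≤ n * δ := fun y => by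
    rw [measureReal_inv_smul_count_singleton]
    exact abs_measureReal_preimage_singleton_sub_inv_le hℓ (hdefect 1 (by omega)) y
  refine ⟨fun i => ℓ ⁻¹' Ys i, fun i => hℓ (.of_discrete), fun i j γ hγ => ?_⟩
  have hγR : (-γ).natAbs ≤ S.sup Int.natAbs + 1 := by
    have := Finset.le_sup (f := Int.natAbs) hγ
    omega
  set D := (· + (γ : ZMod n)) '' Ys i ∩ Ys j
  have hT : ((γ +ᵥ ·) '' (ℓ ⁻¹' Ys i) ∩ ℓ ⁻¹' Ys j) \ equivarianceDefect ℓ (-γ) =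
      ℓ ⁻¹' D \ equivarianceDefect ℓ (-γ) := by
    ext x
    simp only [D, equivarianceDefect, Set.mem_sdiff, Set.mem_inter_iff, Set.mem_preimage,
      Set.image_add_right, Set.image_vadd, Set.mem_vadd_set_iff_neg_vadd_mem,
      Set.mem_ofPred_eq, not_not]
    constructor <;> rintro ⟨⟨hi, hj⟩, hx⟩ <;> refine ⟨⟨?_, hj⟩, hx⟩ <;> simpa [hx] using hi
  have hlevel := abs_measureReal_sub_le_of_diff_eq (μ := μ) hT
  have hcount := abs_measureReal_preimage_sub_le hℓ hfiber D
  rw [ZMod.card] at hcount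
  change |μ.real _ - ν.real D| < ε
  calc _ ≤ |μ.real ((γ +ᵥ ·) '' (ℓ ⁻¹' Ys i) ∩ ℓ ⁻¹' Ys j) - μ.real (ℓ ⁻¹' D)|
        + |μ.real (ℓ ⁻¹' D) - ν.real D| := abs_sub_le _ _ _
    _ ≤ δ + n * (n * δ) := add_le_add (hlevel.trans (hdefect _ hγR)) hcount
    _ < ε := by
      have : δ * (n ^ 2 + 2) = ε := div_mul_cancel₀ _ (by positivity)
      nlinarith [show 0 < δ by positivity]

end WeakContainment

section Markers

variable {X : Type*} [AddAction ℤ X]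

def orbitNbhd (N : ℕ) (A : Set X) : Set X := {x | ∃ j : ℤ, j.natAbs < N ∧ j +ᵥ x ∈ A}

def IsOrbitSeparated (N : ℕ) (A : Set X) : Prop :=
  ∀ x ∈ A, ∀ j : ℕ, 0 < j → j < N → (j : ℤ) +ᵥ x ∉ A

lemma orbitNbhd_mono {N : ℕ} {A B : Set X} (h : A ⊆ B) : orbitNbhd N A ⊆ orbitNbhd N B :=
  fun _ ⟨j, hjN, hj⟩ => ⟨j, hjN, h hj⟩

namespace IsOrbitSeparated

variable {N : ℕ} {A C : Set X}

lemma mono (h : IsOrbitSeparated N A) (hCA : C ⊆ A) : IsOrbitSeparated N C :=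
  fun x hx j hj hjN hjx => h x (hCA hx) j hj hjN (hCA hjx)

lemma union (hA : IsOrbitSeparated N A) (hC : IsOrbitSeparated N C)
    (hdisj : Disjoint C (orbitNbhd N A)) : IsOrbitSeparated N (A ∪ C) := by
  rintro x (hx | hx) j hj hjN (hjx | hjx)
  · exact hA x hx j hj hjN hjx
  · refine hdisj.ne_of_mem hjx ⟨-j, by omega, ?_⟩ rfl
    rwa [neg_vadd_vadd]
  · exact hdisj.ne_of_mem hx ⟨j, by omega, hjx⟩ rfl
  · exact hC x hx j hj hjN hjx

lemma iUnion {U : ℕ → Set X} (hU : Monotone U) (h : ∀ k, IsOrbitSeparated N (U k)) :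
    IsOrbitSeparated N (⋃ k, U k) := by
  intro x hx j hj hjN hjx
  obtain ⟨k, hk⟩ := Set.mem_iUnion.1 hx
  obtain ⟨l, hl⟩ := Set.mem_iUnion.1 hjx
  exact h (max k l) x (hU (le_max_left k l) hk) j hj hjN (hU (le_max_right k l) hl)

end IsOrbitSeparated

def greedyMarker (N : ℕ) (B : ℕ → Set X) : ℕ → Set X
  | 0 => ∅
  | k + 1 => greedyMarker N B k ∪ (B k \ orbitNbhd N (greedyMarker N B k))

section Greedy

variable {N : ℕ} {B : ℕ → Set X}

lemma monotone_greedyMarker : Monotone (greedyMarker N B) :=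
  monotone_nat_of_le_succ fun _ => Set.subset_union_left

lemma isOrbitSeparated_greedyMarker (hB : ∀ k, IsOrbitSeparated N (B k)) (k : ℕ) :
    IsOrbitSeparated N (greedyMarker N B k) := by
  induction k with
  | zero => exact fun x hx => hx.elim
  | succ k ih => exact ih.union ((hB k).mono Set.sdiff_subset) Set.disjoint_sdiff_left

lemma subset_orbitNbhd_greedyMarker (hN : 0 < N) (k : ℕ) :
    B k ⊆ orbitNbhd N (greedyMarker N B (k + 1)) := by
  intro x hx
  by_cases hnear : x ∈ orbitNbhd N (greedyMarker N B k)
  · exact orbitNbhd_mono (monotone_greedyMarker k.le_succ) hnear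
  · exact ⟨0, hN, by simpa [greedyMarker] using Or.inr ⟨hx, hnear⟩⟩

end Greedy

variable [MeasurableSpace X] {μ : Measure X}

lemma measureReal_orbitNbhd_le [VAddInvariantMeasure ℤ X μ] [IsFiniteMeasure μ] (N : ℕ)
    (A : Set X) : μ.real (orbitNbhd N A) ≤ 2 * N * μ.real A := by
  have hsub : orbitNbhd N A ⊆ ⋃ j ∈ Finset.Ioo (-(N : ℤ)) N, (j +ᵥ ·) ⁻¹' A :=
    fun x ⟨j, hjN, hj⟩ => Set.mem_biUnion (Finset.mem_Ioo.2 ⟨by omega, by omega⟩) hj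
  have hcard : ((Finset.Ioo (-(N : ℤ)) N).card : ℝ) ≤ 2 * N := by
    rw [Int.card_Ioo]
    exact_mod_cast (show (N - -N - 1 : ℤ).toNat ≤ 2 * N by omega)
  calc μ.real (orbitNbhd N A) ≤ ∑ j ∈ Finset.Ioo (-(N : ℤ)) N, μ.real ((j +ᵥ ·) ⁻¹' A) :=
        (measureReal_mono hsub (measure_ne_top _ _)).trans (measureReal_biUnion_finset_le _ _)
    _ = (Finset.Ioo (-(N : ℤ)) N).card * μ.real A := by
        simp [measureReal_preimage_vadd]
    _ ≤ 2 * N * μ.real A := by gcongr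

variable [MeasurableConstVAdd ℤ X]

lemma measurableSet_orbitNbhd (N : ℕ) {A : Set X} (hA : MeasurableSet A) :
    MeasurableSet (orbitNbhd N A) := by
  have : orbitNbhd N A = ⋃ j : ℤ, ⋃ (_ : j.natAbs < N), (j +ᵥ ·) ⁻¹' A := by
    ext
    simp [orbitNbhd]
  rw [this]
  exact .iUnion fun j => .iUnion fun _ => measurable_const_vadd j hA

lemma measurableSet_greedyMarker {N : ℕ} {B : ℕ → Set X} (hB : ∀ k, MeasurableSet (B k))
    (k : ℕ) : MeasurableSet (greedyMarker N B k) := by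
  induction k with
  | zero => exact .empty
  | succ k ih => exact ih.union ((hB k).diff (measurableSet_orbitNbhd N ih))

lemma exists_isOrbitSeparated_cover [MeasurableSpace.CountablySeparated X]
    (hfree : ∀ᵐ x ∂μ, ∀ j : ℤ, j +ᵥ x = x → j = 0) (N : ℕ) :
    ∃ B : ℕ → Set X, (∀ k, MeasurableSet (B k)) ∧ (∀ k, IsOrbitSeparated N (B k)) ∧
      ∀ᵐ x ∂μ, ∃ k, x ∈ B k := by
  obtain ⟨S, hSm, hSsep⟩ := exists_seq_separating X MeasurableSet.empty Set.univ
  let E : ℕ × Bool → Set X := fun p => if p.2 then S p.1 else (S p.1)ᶜ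
  have hEm : ∀ p, MeasurableSet (E p) := fun p => by
    by_cases hp : p.2 <;> simp [E, hp, hSm, (hSm _).compl]
  have hEsep : ∀ x y, x ≠ y → ∃ p, x ∈ E p ∧ y ∉ E p := by
    intro x y hxy
    by_contra! h
    refine hxy (hSsep x trivial y trivial fun m => ⟨fun hx => ?_, fun hy => ?_⟩)
    · simpa [E] using h (m, true) (by simpa [E] using hx)
    · by_contra hx
      simpa [E, hy] using h (m, false) (by simpa [E] using hx)
  let C : (Fin N → ℕ × Bool) → Set X := fun c =>
    ⋂ j : Fin N, ⋂ (_ : 0 < (j : ℕ)), E (c j) \ (((j : ℕ) : ℤ) +ᵥ ·) ⁻¹' E (c j)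
  have hCm : ∀ c, MeasurableSet (C c) := fun c =>
    .iInter fun j => .iInter fun _ => (hEm _).diff (measurable_const_vadd _ (hEm _))
  have hCsep : ∀ c, IsOrbitSeparated N (C c) := by
    intro c x hx j hj hjN hjx
    simp only [C, Set.mem_iInter, Set.mem_sdiff, Set.mem_preimage] at hx hjx
    exact (hx ⟨j, hjN⟩ hj).2 (hjx ⟨j, hjN⟩ hj).1
  have hCcov : ∀ᵐ x ∂μ, ∃ c, x ∈ C c := by
    filter_upwards [hfree] with x hx
    have : ∀ j : Fin N, ∃ p, 0 < (j : ℕ) → x ∈ E p ∧ ((j : ℕ) : ℤ) +ᵥ x ∉ E p := by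
      intro j
      by_cases hj : 0 < (j : ℕ)
      · obtain ⟨p, hp⟩ := hEsep x (((j : ℕ) : ℤ) +ᵥ x) fun h => by have := hx _ h.symm; omega
        exact ⟨p, fun _ => hp⟩
      · exact ⟨(0, true), fun h => absurd h hj⟩
    choose c hc using this
    exact ⟨c, by simpa [C] using hc⟩
  obtain ⟨e, he⟩ := exists_surjective_nat (Fin N → ℕ × Bool)
  refine ⟨C ∘ e, fun k => hCm _, fun k => hCsep _, ?_⟩
  filter_upwards [hCcov] with x ⟨c, hc⟩
  obtain ⟨k, rfl⟩ := he c
  exact ⟨k, hc⟩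

theorem exists_isOrbitSeparated_ae_mem_orbitNbhd [MeasurableSpace.CountablySeparated X]
    (hfree : ∀ᵐ x ∂μ, ∀ j : ℤ, j +ᵥ x = x → j = 0) {N : ℕ} (hN : 0 < N) :
    ∃ A, MeasurableSet A ∧ IsOrbitSeparated N A ∧ ∀ᵐ x ∂μ, x ∈ orbitNbhd N A := by
  obtain ⟨B, hBm, hBsep, hBcov⟩ := exists_isOrbitSeparated_cover hfree N
  refine ⟨⋃ k, greedyMarker N B k, .iUnion (measurableSet_greedyMarker hBm),
    .iUnion monotone_greedyMarker (isOrbitSeparated_greedyMarker hBsep), ?_⟩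
  filter_upwards [hBcov] with x ⟨k, hk⟩
  exact orbitNbhd_mono (Set.subset_iUnion _ (k + 1)) (subset_orbitNbhd_greedyMarker hN k hk)

lemma IsOrbitSeparated.natCast_mul_measureReal_le_one [VAddInvariantMeasure ℤ X μ]
    [IsProbabilityMeasure μ] {N : ℕ} {A : Set X} (hsep : IsOrbitSeparated N A)
    (hA : MeasurableSet A) : N * μ.real A ≤ 1 := by
  have hdisj : (Finset.range N : Set ℕ).PairwiseDisjoint (fun j : ℕ => ((j : ℤ) +ᵥ ·) ⁻¹' A) := by
    have key : ∀ p q : ℕ, p < q → q < N →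
        Disjoint (((p : ℤ) +ᵥ ·) ⁻¹' A) (((q : ℤ) +ᵥ ·) ⁻¹' A) := by
      refine fun p q hpq hqN => Set.disjoint_left.2 fun x hp hq => ?_
      refine hsep _ hp (q - p) (by omega) (by omega) ?_
      simpa [vadd_vadd, Nat.cast_sub hpq.le] using hq
    intro p hp q hq hpq
    simp only [Finset.coe_range, Set.mem_Iio] at hp hq
    rcases lt_or_gt_of_ne hpq with h | h
    · exact key p q h hq
    · exact (key q p h hp).symm
  calc N * μ.real A = ∑ j ∈ Finset.range N, μ.real (((j : ℤ) +ᵥ ·) ⁻¹' A) := by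
        simp [measureReal_preimage_vadd]
    _ = μ.real (⋃ j ∈ Finset.range N, ((j : ℤ) +ᵥ ·) ⁻¹' A) :=
        (measureReal_biUnion_finset hdisj fun j _ => measurable_const_vadd _ hA).symm
    _ ≤ 1 := measureReal_le_one

end Markers

section LastVisit

variable {X : Type*} [AddAction ℤ X]

-- Junk value `sInf ∅ = 0` at points that never visit `A` in the past.
noncomputable def lastVisit (A : Set X) (x : X) : ℕ := sInf {m : ℕ | -(m : ℤ) +ᵥ x ∈ A}

lemma lastVisit_eq_of_mem {A : Set X} {x : X} {m : ℕ} (hm : -(m : ℤ) +ᵥ x ∈ A)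
    (hmin : ∀ t < m, -(t : ℤ) +ᵥ x ∉ A) : lastVisit A x = m :=
  le_antisymm (Nat.sInf_le hm) (le_csInf ⟨m, hm⟩ fun t ht => not_lt.1 fun hlt => hmin t hlt ht)

lemma lastVisit_vadd {A : Set X} {x : X} {R : ℕ} (hvisit : ∃ m : ℕ, -(m : ℤ) +ᵥ x ∈ A)
    (hx : x ∉ orbitNbhd (R + 1) A) {γ : ℤ} (hγ : γ.natAbs ≤ R) :
    (lastVisit A (γ +ᵥ x) : ℤ) = lastVisit A x + γ := by
  set m := lastVisit A x
  have hm : -(m : ℤ) +ᵥ x ∈ A := Nat.sInf_mem hvisit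
  have hmin : ∀ t < m, -(t : ℤ) +ᵥ x ∉ A := fun t ht => Nat.notMem_of_lt_sInf ht
  have hRm : R < m := by
    by_contra! h
    exact hx ⟨-m, by omega, hm⟩
  suffices lastVisit A (γ +ᵥ x) = ((m : ℤ) + γ).toNat by omega
  refine lastVisit_eq_of_mem ?_ fun t ht hA => ?_
  · rwa [vadd_vadd, show -(((m : ℤ) + γ).toNat : ℤ) + γ = -m by omega]
  · rw [vadd_vadd] at hA
    rcases le_or_gt (-(t : ℤ) + γ) 0 with hle | hpos
    · refine hmin (t - γ).toNat (by omega) ?_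
      rwa [show -(((t : ℤ) - γ).toNat : ℤ) = -t + γ by omega]
    · exact hx ⟨-t + γ, by omega, hA⟩

lemma equivarianceDefect_lastVisit_subset {n : ℕ} {A : Set X} {R : ℕ} {γ : ℤ}
    (hγ : γ.natAbs ≤ R) :
    equivarianceDefect (fun x => (lastVisit A x : ZMod n)) γ ⊆
      {x | ∀ m : ℕ, -(m : ℤ) +ᵥ x ∉ A} ∪ orbitNbhd (R + 1) A := by
  intro x hx
  by_contra! h
  simp only [Set.mem_union, Set.mem_ofPred_eq, not_or, not_forall, not_not] at h
  apply hx
  have := congrArg (fun z : ℤ => (z : ZMod n)) (lastVisit_vadd h.1 h.2 hγ)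
  push_cast at this
  exact this

variable [MeasurableSpace X]

lemma measurable_lastVisit [MeasurableConstVAdd ℤ X] {A : Set X} (hA : MeasurableSet A) :
    Measurable (lastVisit A) :=
  measurable_sInf_setOf_nat fun _ => measurable_const_vadd _ hA

lemma ae_exists_vadd_mem_of_ae_mem_orbitNbhd {μ : Measure X} [VAddInvariantMeasure ℤ X μ]
    {N : ℕ} {A : Set X} (h : ∀ᵐ x ∂μ, x ∈ orbitNbhd N A) :
    ∀ᵐ x ∂μ, ∃ m : ℕ, -(m : ℤ) +ᵥ x ∈ A := by
  filter_upwards [(tendsto_vadd_ae μ (-(N : ℤ))).eventually h] with x ⟨j, hjN, hj⟩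
  refine ⟨((N : ℤ) - j).toNat, ?_⟩
  rwa [vadd_vadd, show j + -(N : ℤ) = -(((N : ℤ) - j).toNat : ℤ) by omega] at hj

end LastVisit

section FreeActions

variable {X : Type*} [MeasurableSpace X] [AddAction ℤ X] [MeasurableConstVAdd ℤ X]
  [MeasurableSpace.CountablySeparated X] {μ : Measure X} [VAddInvariantMeasure ℤ X μ]
  [IsProbabilityMeasure μ]

theorem exists_measurable_equivarianceDefect_le (hfree : ∀ᵐ x ∂μ, ∀ j : ℤ, j +ᵥ x = x → j = 0)
    (n R : ℕ) {δ : ℝ} (hδ : 0 < δ) :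
    ∃ ℓ : X → ZMod n, Measurable ℓ ∧
      ∀ γ : ℤ, γ.natAbs ≤ R → μ.real (equivarianceDefect ℓ γ) ≤ δ := by
  obtain ⟨N, hN⟩ := exists_nat_gt (2 * (R + 1) / δ)
  have hNpos : (0 : ℝ) < N := lt_of_le_of_lt (by positivity) hN
  obtain ⟨A, hAm, hAsep, hAcov⟩ :=
    exists_isOrbitSeparated_ae_mem_orbitNbhd hfree (μ := μ) (by exact_mod_cast hNpos)
  have hnull : μ.real {x | ∀ m : ℕ, -(m : ℤ) +ᵥ x ∉ A} = 0 := by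
    simpa [ae_iff, measureReal_eq_zero_iff] using ae_exists_vadd_mem_of_ae_mem_orbitNbhd hAcov
  have hA : N * μ.real A ≤ 1 := hAsep.natCast_mul_measureReal_le_one hAm
  refine ⟨fun x => (lastVisit A x : ZMod n), measurable_from_nat.comp (measurable_lastVisit hAm),
    fun γ hγ => ?_⟩
  calc μ.real (equivarianceDefect _ γ)
      ≤ μ.real {x | ∀ m : ℕ, -(m : ℤ) +ᵥ x ∉ A} + μ.real (orbitNbhd (R + 1) A) :=
        (measureReal_mono (equivarianceDefect_lastVisit_subset hγ)).trans
          (measureReal_union_le _ _)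
    _ ≤ 2 * (R + 1) * μ.real A := by
        rw [hnull, zero_add]
        exact_mod_cast measureReal_orbitNbhd_le (R + 1) A
    _ ≤ δ := by
        rw [div_lt_iff₀ hδ] at hN
        nlinarith [measureReal_nonneg (μ := μ) (s := A)]

variable {n : ℕ} [NeZero n]

theorem weaklyContains_zmod_of_free (hfree : ∀ᵐ x ∂μ, ∀ j : ℤ, j +ᵥ x = x → j = 0) :
    WeaklyContains (fun (m : ℤ) (x : X) => m +ᵥ x) μ
      (fun (m : ℤ) (y : ZMod n) => y + (m : ZMod n)) ((n : ℝ≥0∞)⁻¹ • Measure.count) :=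
  weaklyContains_zmod_of_forall_exists_equivarianceDefect_le fun R _ hδ =>
    exists_measurable_equivarianceDefect_le hfree n R hδ

end FreeActions

/-- Every free p.m.p. action of `ℤ` on a standard Borel probability space weakly contains,
for every `n > 0`, the cyclic action of `ℤ` on `n` points with uniform measure. -/
theorem free_Z_action_weakly_contains_cyclic
    {X : Type*} [MeasurableSpace X] [StandardBorelSpace X]
    (μ : Measure X) [IsProbabilityMeasure μ]
    (f : ℤ → X → X) (hf : IsPMPActionZ f μ) (hfree : IsFreeAction f μ)
    (n : ℕ) (hn : 0 < n) :
    WeaklyContains f μ (fun (m : ℤ) (y : ZMod n) => y + (m : ZMod n))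
      ((n : ENNReal)⁻¹ • Measure.count) := by
  obtain ⟨hmp, h0, hadd⟩ := hf
  let : AddAction ℤ X := { vadd := f, zero_vadd := h0, add_vadd := hadd }
  have : MeasurableConstVAdd ℤ X := ⟨fun m => (hmp m).measurable⟩
  have : VAddInvariantMeasure ℤ X μ :=
    ⟨fun m _ hs => (hmp m).measure_preimage hs.nullMeasurableSet⟩
  have : NeZero n := ⟨hn.ne'⟩
  refine weaklyContains_zmod_of_free ?_
  filter_upwards [hfree] with x hx j hj
  by_contra hj0
  exact hx j 0 hj0 (hj.trans (h0 x).symm)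
end

section
/- Fix an integer n > 0. On {0,1}^ℤ with the shift operator T, for a natural number k and 0 ≤ l ≤ n−1 let ‖ω‖_{k,l} = Σ_{i=0}^{k−1} ω(in + l), and let A_k = {ω ∈ {0,1}^ℤ : ‖ω‖_{k,0} > ‖ω‖_{k,l} + n for all 1 ≤ l ≤ n−1}. Then the sets A_k, T A_k, …, T^{n−1} A_k are pairwise disjoint. -/
open Filter Topology

/-- `‖ω‖_{k,l} = ∑_{i=0}^{k-1} ω (i·n + l)`. -/
def wnorm (n : ℕ) (k : ℕ) (l : ℤ) (ω : ℤ → Fin 2) : ℕ :=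
  ∑ i ∈ Finset.range k, (ω ((i : ℤ) * (n : ℤ) + l) : ℕ)

/-- The set `A_k = {ω : ‖ω‖_{k,0} > ‖ω‖_{k,l} + n for all 1 ≤ l ≤ n-1}`. -/
def Aset (n : ℕ) (k : ℕ) : Set (ℤ → Fin 2) :=
  {ω | ∀ l : ℤ, 1 ≤ l → l ≤ (n : ℤ) - 1 → wnorm n k 0 ω > wnorm n k l ω + n}

/-- The shift operator `T` on `{0,1}^ℤ`, `(Tω)(i) = ω (i+1)`. -/
def shiftT (ω : ℤ → Fin 2) : ℤ → Fin 2 := fun i => ω (i + 1)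

/-! If `T^m α = T^{m'} β` with `m < m'`, then `β` is `α` translated by
`d = m' - m ∈ [1, n-1]`, so `‖β‖_{k,d} = ‖α‖_{k,0}` while `‖β‖_{k,0}` exceeds `‖α‖_{k,n-d}` by at
most the single boundary term `β 0 ≤ 1`. Membership of `α` and of `β` in `A_k` then gives
`‖β‖_{k,0} > ‖α‖_{k,0} + n > ‖α‖_{k,n-d} + 2n ≥ ‖β‖_{k,0} + 2n - 1`, which is absurd. -/

theorem iterate_shiftT_apply (m : ℕ) (ω : ℤ → Fin 2) (i : ℤ) :
    shiftT^[m] ω i = ω (i + m) := by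
  induction m generalizing ω with
  | zero => simp
  | succ m ih =>
    rw [Function.iterate_succ_apply, ih, shiftT]
    push_cast
    ring_nf

theorem translate_of_iterate_shiftT_eq {m m' : ℕ} {α β : ℤ → Fin 2}
    (h : shiftT^[m'] β = shiftT^[m] α) (j : ℤ) : β j = α (j - (m' - m)) := by
  have := congrFun h (j - m')
  rw [iterate_shiftT_apply, iterate_shiftT_apply, sub_add_cancel] at this
  rw [this]
  ring_nf

theorem wnorm_of_translate {n k : ℕ} {α β : ℤ → Fin 2} {d : ℤ} (hβ : ∀ j, β j = α (j - d))
    (l : ℤ) : wnorm n k l β = wnorm n k (l - d) α :=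
  Finset.sum_congr rfl fun i _ => by rw [hβ, add_sub_assoc]

theorem wnorm_sub_le (n k : ℕ) (l : ℤ) (ω : ℤ → Fin 2) :
    wnorm n k (l - n) ω ≤ wnorm n k l ω + 1 := by
  cases k with
  | zero => simp [wnorm]
  | succ k =>
    have hterm : ∀ i ∈ Finset.range k,
        (ω (((i + 1 : ℕ) : ℤ) * n + (l - n)) : ℕ) = ω ((i : ℤ) * n + l) := by
      intro i _
      push_cast
      ring_nf
    calc wnorm n (k + 1) (l - n) ω
        = ∑ i ∈ Finset.range k, (ω ((i : ℤ) * n + l) : ℕ) + ω ((0 : ℕ) * (n : ℤ) + (l - n)) := by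
          rw [wnorm, Finset.sum_range_succ', Finset.sum_congr rfl hterm]
      _ ≤ wnorm n (k + 1) l ω + 1 :=
          add_le_add (Finset.sum_le_sum_of_subset (Finset.range_subset_range.mpr k.le_succ))
            (Fin.is_le _)

theorem translate_notMem_Aset {n k : ℕ} {α β : ℤ → Fin 2} {d : ℤ} (hd : 1 ≤ d)
    (hdn : d ≤ n - 1) (hα : α ∈ Aset n k) (hβ : ∀ j, β j = α (j - d)) : β ∉ Aset n k := by
  intro hβA
  have hαA := hα (n - d) (by omega) (by omega)
  have hβd := hβA d hd hdn
  have hβ0 : wnorm n k 0 β ≤ wnorm n k (n - d) α + 1 := by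
    rw [wnorm_of_translate hβ, show (0 : ℤ) - d = n - d - n by ring]
    exact wnorm_sub_le n k _ α
  rw [wnorm_of_translate hβ d, sub_self] at hβd
  omega

theorem shifted_Asets_pairwise_disjoint_general (n : ℕ) (k : ℕ) :
    ∀ m m' : ℕ, m < n → m' < n → m ≠ m' →
      Disjoint (shiftT^[m] '' Aset n k) (shiftT^[m'] '' Aset n k) := by
  intro m m' hm hm' hne
  wlog hlt : m < m' generalizing m m'
  · exact (this m' m hm' hm hne.symm (by omega)).symm
  rw [Set.disjoint_left]
  rintro _ ⟨α, hα, rfl⟩ ⟨β, hβ, hshift⟩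
  exact translate_notMem_Aset (by omega) (by omega) hα (translate_of_iterate_shiftT_eq hshift) hβ

/-- The sets `A_k, T A_k, …, T^{n-1} A_k` are pairwise disjoint. -/
theorem shifted_Asets_pairwise_disjoint (n : ℕ) (hn : 0 < n) (k : ℕ) :
    ∀ m m' : ℕ, m < n → m' < n → m ≠ m' →
      Disjoint (shiftT^[m] '' Aset n k) (shiftT^[m'] '' Aset n k) :=
  shifted_Asets_pairwise_disjoint_general n k
end

section
/- Fix an integer n > 0. On {0,1}^ℤ endowed with the Bernoulli product measure with p(0) = p(1) = 1/2, for a natural number k and 0 ≤ l ≤ n−1 let ‖ω‖_{k,l} = Σ_{i=0}^{k−1} ω(in + l), and let A_k = {ω ∈ {0,1}^ℤ : ‖ω‖_{k,0} > ‖ω‖_{k,l} + n for all 1 ≤ l ≤ n−1}. Then the measure of A_k converges to 1/n as k tends to infinity. -/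
open MeasureTheory Filter Topology

/-!
Split `ω` into the `n` residue classes mod `n` and read off, on the first `k` sites of each class,
a column of `k` fair bits; the columns are independent and uniform. Let `G_l` be the event that
column `l` beats every other column by more than `n`, so that `A_k = G_0`. Permuting the columns
shows that the `G_l` all have the same probability, and they are disjoint, so `P(G_0) ≤ 1/n`.
Off `⋃ G_l`, the column `l` of largest weight is within `n` of some other column `m`; for two
independent `Bin(k, 1/2)` weights each of the `n + 1` possible differences has probability at most
`C(2k, k) / 4^k = O(k^{-1/2})`, whence `P(G_0) ≥ 1/n - n(n + 1) C(2k, k) / 4^k`.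
-/

open Finset

namespace IsBernoulliMeasure

variable {Γ κ ι : Type*} [MeasurableSpace κ] [MeasurableSingletonClass κ] [Fintype ι]
  {κm : Measure κ} {ν : Measure (Γ → κ)} {e : ι → Γ}

theorem measure_forall_apply_eq (hν : IsBernoulliMeasure κm ν) (he : e.Injective)
    (c : ι → κ) : ν {ω | ∀ i, ω (e i) = c i} = ∏ i, κm {c i} := by
  classical
  set B : Γ → Set κ := fun γ => ⋂ (i) (_ : e i = γ), {c i}
  have hB : ∀ i, B (e i) = {c i} := fun i => by ext; simp [B, he.eq_iff]
  have h := hν.2 (univ.image e) B fun γ => .iInter fun i => .iInter fun _ => .singleton _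
  rw [prod_image he.injOn] at h
  simpa [hB] using h

theorem measure_comp_mem (hν : IsBernoulliMeasure κm ν) (he : e.Injective)
    (S : Finset (ι → κ)) :
    ν {ω | (fun i => ω (e i)) ∈ S} = ∑ c ∈ S, ∏ i, κm {c i} := by
  have hS : {ω | (fun i => ω (e i)) ∈ S}
      = ⋃ c ∈ S, {ω : Γ → κ | ∀ i, ω (e i) = c i} := by
    ext ω; simp [← funext_iff]
  rw [hS, measure_biUnion_finset]
  · exact sum_congr rfl fun c _ => hν.measure_forall_apply_eq he c
  · intro c _ c' _ hcc'
    refine Set.disjoint_left.2 fun ω hω hω' => hcc' (funext fun i => ?_)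
    exact (hω i).symm.trans (hω' i)
  · intro c _
    simp only [Set.ofPred_forall]
    exact .iInter fun i => (measurableSet_singleton (c i)).preimage (measurable_pi_apply (e i))

end IsBernoulliMeasure

lemma Nat.two_mul_add_one_mul_centralBinom_sq_le (k : ℕ) :
    (2 * k + 1) * k.centralBinom ^ 2 ≤ 16 ^ k := by
  induction k with
  | zero => simp
  | succ k ih =>
    refine Nat.le_of_mul_le_mul_left ?_ (by positivity : 0 < (k + 1) ^ 2)
    calc (k + 1) ^ 2 * ((2 * (k + 1) + 1) * (k + 1).centralBinom ^ 2)
        = (2 * k + 3) * ((k + 1) * (k + 1).centralBinom) ^ 2 := by ring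
      _ = 4 * (2 * k + 3) * (2 * k + 1) * ((2 * k + 1) * k.centralBinom ^ 2) := by
          rw [Nat.succ_mul_centralBinom_succ]; ring
      _ ≤ 16 * (k + 1) ^ 2 * 16 ^ k := Nat.mul_le_mul (by nlinarith) ih
      _ = (k + 1) ^ 2 * 16 ^ (k + 1) := by ring

lemma tendsto_centralBinom_div_four_pow :
    Tendsto (fun k : ℕ => (k.centralBinom : ℝ) / 4 ^ k) atTop (𝓝 0) := by
  have hsq : Tendsto (fun k : ℕ => ((k.centralBinom : ℝ) / 4 ^ k) ^ 2) atTop (𝓝 0) := by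
    refine squeeze_zero (fun k => by positivity) (fun k => ?_)
      tendsto_one_div_add_atTop_nhds_zero_nat
    have h : ((2 * k + 1 : ℕ) : ℝ) * (k.centralBinom : ℝ) ^ 2 ≤ (4 ^ k) ^ 2 := by
      rw [← pow_mul, mul_comm k, pow_mul]
      exact_mod_cast Nat.two_mul_add_one_mul_centralBinom_sq_le k
    rw [div_pow, div_le_div_iff₀ (by positivity) (by positivity)]
    push_cast at h
    nlinarith
  refine (hsq.sqrt.congr fun k => Real.sqrt_sq (by positivity)).trans ?_
  rw [Real.sqrt_zero]

section BinaryWords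

variable {α : Type*} [Fintype α]

def weight (a : α → Fin 2) : ℕ := ∑ i, (a i : ℕ)

lemma weight_eq_card_filter [DecidableEq α] (a : α → Fin 2) : weight a = #{i | a i = 1} := by
  have key : ∀ v : Fin 2, (v : ℕ) = if v = 1 then 1 else 0 := by decide
  rw [card_filter, weight]
  exact sum_congr rfl fun i _ => key (a i)

lemma weight_add_weight_one_sub (a : α → Fin 2) :
    weight a + weight (1 - a) = Fintype.card α := by
  have key : ∀ v : Fin 2, (v : ℕ) + ((1 - v : Fin 2) : ℕ) = 1 := by decide
  rw [weight, weight, ← sum_add_distrib, Fintype.card_eq_sum_ones]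
  exact sum_congr rfl fun i _ => key (a i)

lemma weight_sumElim {α' : Type*} [Fintype α'] (a : α → Fin 2) (b : α' → Fin 2) :
    weight (Sum.elim a b) = weight a + weight b :=
  Fintype.sum_sum_type _

variable [DecidableEq α]

variable (α) in
lemma card_filter_weight_eq (s : ℕ) :
    #{a : α → Fin 2 | weight a = s} = (Fintype.card α).choose s := by
  rw [← card_univ, ← card_powersetCard]
  refine card_nbij' (fun a => ({i | a i = 1} : Finset α)) (fun t i => if i ∈ t then 1 else 0)
    (fun a ha => ?_) (fun t ht => ?_) (fun a _ => ?_) (fun t _ => ?_)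
  · simp_all [weight_eq_card_filter]
  · simp_all [weight_eq_card_filter]
  · have key : ∀ v : Fin 2, (if v = 1 then 1 else 0) = v := by decide
    exact funext fun i => by simp [key]
  · ext i; by_cases i ∈ t <;> simp_all

lemma card_filter_weight_eq_weight_add_le (j : ℕ) :
    #{p : (α → Fin 2) × (α → Fin 2) | weight p.1 = weight p.2 + j}
      ≤ (Fintype.card α).centralBinom := by
  -- `(a, b) ↦ a ++ (1 - b)` turns a weight difference `j` into a total weight `card α + j`.
  calc _ ≤ #{c : α ⊕ α → Fin 2 | weight c = Fintype.card α + j} := by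
        refine card_le_card_of_injOn (fun p => Sum.elim p.1 (1 - p.2)) (fun p hp => ?_)
          (fun p _ q _ hpq => ?_)
        · have := weight_add_weight_one_sub p.2
          simp only [coe_filter, Set.mem_ofPred_eq, mem_univ, true_and, weight_sumElim] at hp ⊢
          omega
        · obtain ⟨h1, h2⟩ := Sum.elim_eq_iff.1 hpq
          exact Prod.ext h1 (sub_right_injective h2)
    _ = (2 * Fintype.card α).choose (Fintype.card α + j) := by
        rw [card_filter_weight_eq, Fintype.card_sum, two_mul]
    _ ≤ _ := Nat.choose_le_centralBinom _ _

lemma card_filter_weight_le_weight_add_le (d : ℕ) :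
    #{p : (α → Fin 2) × (α → Fin 2) |
        weight p.2 ≤ weight p.1 ∧ weight p.1 ≤ weight p.2 + d}
      ≤ (d + 1) * (Fintype.card α).centralBinom := by
  calc _ ≤ #((range (d + 1)).biUnion fun j =>
          ({p : (α → Fin 2) × (α → Fin 2) | weight p.1 = weight p.2 + j} : Finset _)) := by
        refine card_le_card fun p hp => ?_
        simp only [mem_filter, mem_univ, true_and, mem_biUnion, mem_range] at hp ⊢
        exact ⟨weight p.1 - weight p.2, by omega, by omega⟩
    _ ≤ _ := by
        simpa using card_biUnion_le_card_mul (range (d + 1)) _ _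
          fun j _ => card_filter_weight_eq_weight_add_le (α := α) j

end BinaryWords

section Leaders

variable {ι β : Type*} [Fintype ι] [DecidableEq ι] [Fintype β]

def leaderSet (f : β → ℕ) (d : ℕ) (l : ι) : Finset (ι → β) :=
  {x | ∀ m ≠ l, f (x m) + d < f (x l)}

variable {f : β → ℕ} {d : ℕ}

lemma comp_mem_leaderSet_iff (σ : Equiv.Perm ι) (x : ι → β) (l : ι) :
    x ∘ σ ∈ leaderSet f d l ↔ x ∈ leaderSet f d (σ l) := by
  simp only [leaderSet, mem_filter, mem_univ, true_and, Function.comp_apply]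
  rw [σ.forall_congr_left]
  simp [σ.symm_apply_eq]

lemma card_leaderSet_eq (l l' : ι) : #(leaderSet f d l) = #(leaderSet f d l') := by
  set σ := Equiv.swap l l'
  refine card_nbij' (· ∘ σ) (· ∘ σ) (fun x hx => ?_) (fun x hx => ?_) (fun x _ => ?_)
    (fun x _ => ?_)
  · rwa [mem_coe, comp_mem_leaderSet_iff, Equiv.swap_apply_right]
  · rwa [mem_coe, comp_mem_leaderSet_iff, Equiv.swap_apply_left]
  all_goals exact funext fun j => by simp [σ]

lemma disjoint_leaderSet {l l' : ι} (h : l ≠ l') :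
    Disjoint (leaderSet f d l) (leaderSet f d l') := by
  rw [disjoint_left]
  intro x hl hl'
  simp only [leaderSet, mem_filter, mem_univ, true_and] at hl hl'
  have := hl l' h.symm
  have := hl' l h
  omega

lemma card_biUnion_leaderSet [DecidableEq β] (l : ι) :
    #((univ : Finset ι).biUnion (leaderSet f d)) = Fintype.card ι * #(leaderSet f d l) := by
  rw [card_biUnion fun l _ l' _ h => disjoint_leaderSet h]
  simp [card_leaderSet_eq _ l]

lemma card_mul_card_leaderSet_le [DecidableEq β] (l : ι) :
    Fintype.card ι * #(leaderSet f d l) ≤ Fintype.card β ^ Fintype.card ι := by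
  rw [← card_biUnion_leaderSet, ← Fintype.card_fun, ← card_univ]
  exact card_le_univ _

lemma card_filter_apply_apply_mul_le {l m : ι} (hlm : l ≠ m) (P : β → β → Prop)
    [DecidableRel P] :
    #{x : ι → β | P (x l) (x m)} * Fintype.card β ^ 2
      ≤ #{p : β × β | P p.1 p.2} * Fintype.card β ^ Fintype.card ι := by
  set T : Finset ι := {l, m}ᶜ
  have hinj : #{x : ι → β | P (x l) (x m)}
      ≤ #(({p : β × β | P p.1 p.2} : Finset (β × β)) ×ˢ (univ : Finset (T → β))) := by
    refine card_le_card_of_injOn (fun x => ((x l, x m), fun j => x j))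
      (fun x hx => by simpa using hx) (fun x _ y _ hxy => funext fun j => ?_)
    simp only [Prod.mk.injEq, funext_iff] at hxy
    by_cases hj : j = l ∨ j = m
    · rcases hj with rfl | rfl
      exacts [hxy.1.1, hxy.1.2]
    · exact hxy.2 ⟨j, by simpa [T] using hj⟩
  have hT : #T + 2 = Fintype.card ι := by
    rw [← card_pair hlm, card_compl_add_card]
  calc _ ≤ #{p : β × β | P p.1 p.2} * Fintype.card β ^ #T * Fintype.card β ^ 2 := by
        gcongr
        simpa using hinj
    _ = _ := by rw [mul_assoc, ← pow_add, hT]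

lemma exists_mem_leaderSet_or_near [Nonempty ι] (x : ι → β) :
    (∃ l, x ∈ leaderSet f d l) ∨
      ∃ l m, l ≠ m ∧ f (x m) ≤ f (x l) ∧ f (x l) ≤ f (x m) + d := by
  obtain ⟨l, -, hl⟩ := exists_max_image univ (f ∘ x) univ_nonempty
  by_cases hx : x ∈ leaderSet f d l
  · exact .inl ⟨l, hx⟩
  · simp only [leaderSet, mem_filter, mem_univ, true_and, not_forall, not_lt] at hx
    obtain ⟨m, hm, hml⟩ := hx
    exact .inr ⟨l, m, Ne.symm hm, hl m (mem_univ m), hml⟩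

lemma card_pow_mul_sq_le_card_leaderSet_add [DecidableEq β] (l : ι) :
    Fintype.card β ^ Fintype.card ι * Fintype.card β ^ 2
      ≤ Fintype.card ι * #(leaderSet f d l) * Fintype.card β ^ 2
        + Fintype.card ι ^ 2 * (#{p : β × β | f p.2 ≤ f p.1 ∧ f p.1 ≤ f p.2 + d}
          * Fintype.card β ^ Fintype.card ι) := by
  have : Nonempty ι := ⟨l⟩
  set near : ι × ι → Finset (ι → β) :=
    fun q => {x | f (x q.2) ≤ f (x q.1) ∧ f (x q.1) ≤ f (x q.2) + d}
  have hcover : (univ : Finset (ι → β))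
      ⊆ univ.biUnion (leaderSet f d) ∪ univ.offDiag.biUnion near := by
    intro x _
    rcases exists_mem_leaderSet_or_near (f := f) (d := d) x with ⟨l, hl⟩ | ⟨l, m, hlm, h⟩
    · exact mem_union_left _ (mem_biUnion.2 ⟨l, mem_univ _, hl⟩)
    · refine mem_union_right _ (mem_biUnion.2 ⟨(l, m), ?_, ?_⟩)
      exacts [by simpa using hlm, by simpa [near] using h]
  set c := #{p : β × β | f p.2 ≤ f p.1 ∧ f p.1 ≤ f p.2 + d}
  have hnear : #(univ.offDiag.biUnion near) * Fintype.card β ^ 2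
      ≤ Fintype.card ι ^ 2 * (c * Fintype.card β ^ Fintype.card ι) := by
    calc _ ≤ (∑ q ∈ univ.offDiag, #(near q)) * Fintype.card β ^ 2 := by
          gcongr; exact card_biUnion_le
      _ = ∑ q ∈ univ.offDiag, #(near q) * Fintype.card β ^ 2 := sum_mul _ _ _
      _ ≤ ∑ q ∈ (univ : Finset ι).offDiag, c * Fintype.card β ^ Fintype.card ι :=
          sum_le_sum fun q hq => card_filter_apply_apply_mul_le (mem_offDiag.1 hq).2.2
            fun a b => f b ≤ f a ∧ f a ≤ f b + d
      _ ≤ _ := by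
          rw [sum_const, smul_eq_mul, sq, ← card_univ]
          gcongr
          rw [offDiag_card]
          exact Nat.sub_le _ _
  calc Fintype.card β ^ Fintype.card ι * Fintype.card β ^ 2
      = #(univ : Finset (ι → β)) * Fintype.card β ^ 2 := by simp
    _ ≤ (#(univ.biUnion (leaderSet f d)) + #(univ.offDiag.biUnion near))
          * Fintype.card β ^ 2 := by
        gcongr; exact (card_le_card hcover).trans (card_union_le _ _)
    _ ≤ _ := by rw [add_mul, card_biUnion_leaderSet l]; exact add_le_add_right hnear _

end Leaders

section Columns

def columns (n k : ℕ) (ω : ℤ → Fin 2) (l : Fin n) (i : Fin k) : Fin 2 :=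
  ω ((i : ℤ) * n + l)

variable {n k : ℕ}

lemma wnorm_eq_weight_columns (ω : ℤ → Fin 2) (l : Fin n) :
    wnorm n k l ω = weight (columns n k ω l) :=
  (Fin.sum_univ_eq_sum_range (fun i => (ω ((i : ℤ) * n + l) : ℕ)) k).symm

lemma Aset_eq_columns_preimage [NeZero n] :
    Aset n k = {ω | columns n k ω ∈ leaderSet weight n 0} := by
  ext ω
  simp only [Aset, leaderSet, Set.mem_ofPred_eq, mem_filter, mem_univ, true_and]
  constructor
  · intro h m hm
    rw [← wnorm_eq_weight_columns, ← wnorm_eq_weight_columns, Fin.val_zero, Nat.cast_zero]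
    have : (m : ℕ) ≠ 0 := by simpa using Fin.val_ne_of_ne hm
    exact h m (by omega) (by omega)
  · intro h l hl1 hln
    have hl : ((⟨l.toNat, by omega⟩ : Fin n) : ℤ) = l := Int.toNat_of_nonneg (by omega)
    have := h ⟨l.toNat, by omega⟩ (Fin.ne_of_val_ne (by rw [Fin.val_zero]; omega))
    rwa [← wnorm_eq_weight_columns, ← wnorm_eq_weight_columns, hl, Fin.val_zero,
      Nat.cast_zero] at this

lemma IsBernoulliMeasure.toReal_measure_columns_mem {ν : Measure (ℤ → Fin 2)}
    (hν : IsBernoulliMeasure ((2 : ENNReal)⁻¹ • Measure.count) ν)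
    (S : Finset (Fin n → Fin k → Fin 2)) :
    (ν {ω | columns n k ω ∈ S}).toReal = #S / 2 ^ (n * k) := by
  -- `e (l, i) = i * n + l`
  set e : Fin n × Fin k → ℤ := fun p => (finProdFinEquiv (p.2, p.1) : ℕ)
  have he : e.Injective := fun p q h => by
    obtain ⟨h2, h1⟩ :=
      Prod.ext_iff.1 (finProdFinEquiv.injective (Fin.val_injective (Nat.cast_injective h)))
    exact Prod.ext h1 h2
  have hS : {ω | columns n k ω ∈ S}
      = {ω | (fun p => ω (e p)) ∈ S.map (Equiv.curry _ _ _).symm.toEmbedding} := by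
    ext ω
    simp only [Set.mem_ofPred_eq, mem_map_equiv, Equiv.symm_symm]
    convert Iff.rfl using 3
    ext l i
    simp only [columns, Equiv.curry_apply, Function.curry, e, finProdFinEquiv_apply_val]
    push_cast
    ring_nf
  rw [hS, hν.measure_comp_mem he]
  simp [div_eq_mul_inv]

end Columns

section Estimates

variable (n k : ℕ) [NeZero n]

lemma card_leaderSet_weight_div_le :
    (#(leaderSet (weight (α := Fin k)) n (0 : Fin n)) : ℝ) / 2 ^ (n * k) ≤ 1 / n := by
  have h := card_mul_card_leaderSet_le (f := weight (α := Fin k)) (d := n) (0 : Fin n)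
  simp only [Fintype.card_fin, Fintype.card_fun, ← pow_mul, mul_comm k] at h
  rw [div_le_div_iff₀ (by positivity) (by simp [NeZero.pos n]), one_mul, mul_comm]
  exact_mod_cast h

lemma one_div_sub_le_card_leaderSet_weight_div :
    1 / n - n * (n + 1) * ((k.centralBinom : ℝ) / 4 ^ k)
      ≤ #(leaderSet (weight (α := Fin k)) n (0 : Fin n)) / 2 ^ (n * k) := by
  have h := card_pow_mul_sq_le_card_leaderSet_add (f := weight (α := Fin k)) (d := n) (0 : Fin n)
  have hnear := card_filter_weight_le_weight_add_le (α := Fin k) n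
  simp only [Fintype.card_fin, Fintype.card_fun] at h hnear
  replace h := h.trans (add_le_add_right (Nat.mul_le_mul_left _ (Nat.mul_le_mul_right _ hnear)) _)
  rw [← pow_mul, ← pow_mul, mul_comm k] at h
  have hR : ((2 : ℝ) ^ (n * k) * 4 ^ k)
      ≤ n * #(leaderSet (weight (α := Fin k)) n (0 : Fin n)) * 4 ^ k
        + n ^ 2 * ((n + 1) * k.centralBinom * 2 ^ (n * k)) := by
    rw [show (4 : ℝ) ^ k = 2 ^ (k * 2) by rw [pow_mul']; norm_num]
    exact_mod_cast h
  have hn : (0 : ℝ) < n := by simp [NeZero.pos n]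
  rw [sub_le_iff_le_add]
  calc 1 / (n : ℝ) = 2 ^ (n * k) * 4 ^ k / (n * 2 ^ (n * k) * 4 ^ k) := by field_simp
    _ ≤ (n * #(leaderSet (weight (α := Fin k)) n (0 : Fin n)) * 4 ^ k
          + n ^ 2 * ((n + 1) * k.centralBinom * 2 ^ (n * k))) / (n * 2 ^ (n * k) * 4 ^ k) := by
        gcongr
    _ = _ := by field_simp

end Estimates

/-- For the Bernoulli `(1/2, 1/2)` product measure on `{0,1}^ℤ`, the measure of `A_k`
converges to `1/n` as `k → ∞`. -/
theorem measure_Aset_tendsto (n : ℕ) (hn : 0 < n)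
    (ν : Measure (ℤ → Fin 2))
    (hν : IsBernoulliMeasure ((2 : ENNReal)⁻¹ • Measure.count) ν) :
    Tendsto (fun k : ℕ => (ν (Aset n k)).toReal) atTop (nhds (1 / (n : ℝ))) := by
  have : NeZero n := ⟨hn.ne'⟩
  have hA : (fun k => (ν (Aset n k)).toReal)
      = fun k => (#(leaderSet (weight (α := Fin k)) n (0 : Fin n)) : ℝ) / 2 ^ (n * k) := by
    ext k
    rw [Aset_eq_columns_preimage, hν.toReal_measure_columns_mem]
  have hlower :
      Tendsto (fun k : ℕ => 1 / (n : ℝ) - n * (n + 1) * ((k.centralBinom : ℝ) / 4 ^ k)) atTop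
        (𝓝 (1 / n)) := by
    simpa using (tendsto_centralBinom_div_four_pow.const_mul ((n : ℝ) * (n + 1))).const_sub
      (1 / (n : ℝ))
  rw [hA]
  exact tendsto_of_tendsto_of_tendsto_of_le_of_le hlower tendsto_const_nhds
    (fun k => one_div_sub_le_card_leaderSet_weight_div n k)
    (fun k => card_leaderSet_weight_div_le n k)
end

section
/- Let g be a p.m.p. action of the countable group Γ on a standard Borel probability space (Y, ν) and let K be a compact metrizable space. Then E(g, K) is contained in the weak* closure of the union, over all finite subsets L ⊆ K, of E(g, L) (where an invariant measure on L^Γ is regarded as an invariant measure on K^Γ via the inclusion L^Γ ⊆ K^Γ). -/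
open MeasureTheory Filter Topology

open TopologicalSpace in
/-- `E(g, K)`: the set of invariant measures on `K^Γ` obtained as pushforwards `Φ∘ν` of `ν`
under maps `Φ(y)(γ) = φ(g_γ y)` for Borel `φ : Y → K`. -/
def EClass {Γ Y : Type*} (K : Type*) [MeasurableSpace Y] [TopologicalSpace K]
    [MeasurableSpace K] (g : Γ → Y → Y) (ν : Measure Y) [IsProbabilityMeasure ν] :
    Set (ProbabilityMeasure (Γ → K)) :=
  {ρ | ∃ φ : Y → K, Measurable φ ∧
    (ρ : Measure (Γ → K)) = ν.map (fun y => fun γ : Γ => φ (g γ y))}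

open TopologicalSpace in
/-- `E(g, L)` for a finite `L ⊆ K`, regarded inside the measures on `K^Γ` via `L^Γ ⊆ K^Γ`:
pushforwards coming from Borel maps `φ : Y → K` taking values in `L`. -/
def EClassFin {Γ Y : Type*} (K : Type*) [MeasurableSpace Y] [TopologicalSpace K]
    [MeasurableSpace K] (g : Γ → Y → Y) (ν : Measure Y) [IsProbabilityMeasure ν]
    (L : Finset K) : Set (ProbabilityMeasure (Γ → K)) :=
  {ρ | ∃ φ : Y → K, Measurable φ ∧ (∀ y, φ y ∈ L) ∧
    (ρ : Measure (Γ → K)) = ν.map (fun y => fun γ : Γ => φ (g γ y))}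

/-! Compose `φ` with simple functions `πₙ : K → K` converging pointwise to the identity (nearest
point among the first `n` terms of a dense sequence). Then `y ↦ (πₙ (φ (g γ y)))_γ` converges
pointwise to `Φ`, so its law, which lies in `E(g, range πₙ)`, converges weakly to `Φ∘ν`. -/

open TopologicalSpace in
theorem MeasureTheory.SimpleFunc.exists_seq_tendsto_id (K : Type*) [TopologicalSpace K]
    [PseudoMetrizableSpace K] [SeparableSpace K] [MeasurableSpace K] [OpensMeasurableSpace K]
    [Nonempty K] : ∃ π : ℕ → SimpleFunc K K, ∀ x, Tendsto (fun n => π n x) atTop (𝓝 x) := by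
  let := pseudoMetrizableSpacePseudoMetric K
  exact ⟨nearestPt (denseSeq K), fun x =>
    tendsto_nearestPt ((denseRange_denseSeq K).closure_eq ▸ Set.mem_univ x)⟩

open TopologicalSpace in
theorem EClass_subset_closure_union_finite_general
    {Γ : Type} [Group Γ] [Countable Γ]
    {Y : Type} [MeasurableSpace Y]
    (ν : Measure Y) [IsProbabilityMeasure ν] (g : Γ → Y → Y) (hg : IsPMPAction g ν)
    (K : Type) [TopologicalSpace K] [MetrizableSpace K]
    [SecondCountableTopology K] [MeasurableSpace K] [BorelSpace K] :
    EClass K g ν ⊆ closure (⋃ L : Finset K, EClassFin K g ν L) := by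
  rintro ρ ⟨φ, hφ, hρ⟩
  have : Nonempty K := (nonempty_of_isProbabilityMeasure ν).map φ
  obtain ⟨π, hπ⟩ := SimpleFunc.exists_seq_tendsto_id K
  have hφg (γ : Γ) : Measurable fun y => φ (g γ y) := hφ.comp (hg.1 γ).measurable
  have hconv := tendstoInDistribution_of_ae_tendsto (l := atTop) (μ' := ν)
    (fun n => (measurable_pi_lambda _ fun γ => (π n).measurable.comp (hφg γ)).aemeasurable)
    (measurable_pi_lambda _ hφg).aemeasurable
    (ae_of_all _ fun y => tendsto_pi_nhds.2 fun γ => hπ _)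
  obtain rfl : ρ = ⟨_, Measure.isProbabilityMeasure_map hconv.aemeasurable_limit⟩ :=
    Subtype.ext hρ
  refine mem_closure_of_tendsto hconv.tendsto (Eventually.of_forall fun n => ?_)
  exact Set.mem_iUnion.2
    ⟨(π n).range, π n ∘ φ, (π n).measurable.comp hφ, fun y => (π n).mem_range_self _, rfl⟩

open TopologicalSpace in
/-- `E(g,K)` is contained in the weak* closure of the union of the `E(g,L)` over the finite
subsets `L ⊆ K`. -/
theorem EClass_subset_closure_union_finite
    {Γ : Type} [Group Γ] [Countable Γ]
    {Y : Type} [MeasurableSpace Y] [StandardBorelSpace Y]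
    (ν : Measure Y) [IsProbabilityMeasure ν] (g : Γ → Y → Y) (hg : IsPMPAction g ν)
    (K : Type) [TopologicalSpace K] [CompactSpace K] [MetrizableSpace K]
    [SecondCountableTopology K] [MeasurableSpace K] [BorelSpace K] :
    EClass K g ν ⊆ closure (⋃ L : Finset K, EClassFin K g ν L) :=
  EClass_subset_closure_union_finite_general ν g hg K
end

section
/- Let f be an ergodic p.m.p. action of a countable group Γ on a standard Borel probability space (X, μ) that is not strongly ergodic. Then f weakly contains f × b, where b is the trivial (identity) action of Γ on two points with equal mass, i.e., the diagonal action of Γ on (X, μ) × ({0,1}, uniform measure) in which Γ acts trivially on the second coordinate. -/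
open MeasureTheory Filter Topology

/-- The action `f` is ergodic: every invariant Borel set is null or conull. -/
def IsErgodicAction {Γ X : Type*} [MeasurableSpace X]
    (f : Γ → X → X) (μ : Measure X) : Prop :=
  ∀ A : Set X, MeasurableSet A → (∀ γ : Γ, f γ ⁻¹' A = A) → μ A = 0 ∨ μ A = 1

/-- A sequence of Borel sets `A n` is almost invariant:
`μ (f_γ A_n ∆ A_n) → 0` for every `γ`. -/
def AlmostInvariantSeq {Γ X : Type*} [MeasurableSpace X]
    (f : Γ → X → X) (μ : Measure X) (A : ℕ → Set X) : Prop :=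
  ∀ γ : Γ, Tendsto (fun n => μ (symmDiff (f γ '' A n) (A n))) atTop (nhds 0)

/-- A sequence of sets `A n` is trivial: `μ(A_n)(1 - μ(A_n)) → 0`. -/
def TrivialSeq {X : Type*} [MeasurableSpace X] (μ : Measure X) (A : ℕ → Set X) : Prop :=
  Tendsto (fun n => μ (A n) * (1 - μ (A n))) atTop (nhds 0)

/-- The action `f` is strongly ergodic: it is ergodic and every almost invariant sequence of
Borel sets is trivial. -/
def IsStronglyErgodic {Γ X : Type*} [MeasurableSpace X]
    (f : Γ → X → X) (μ : Measure X) : Prop :=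
  IsErgodicAction f μ ∧
    ∀ A : ℕ → Set X, (∀ n, MeasurableSet (A n)) →
      AlmostInvariantSeq f μ A → TrivialSeq μ A

/-!
A nontrivial almost invariant sequence `A n` gives, along an ultrafilter `U`, the limit measure
`ρ s = lim_U μ (s ∩ A n)`. It is dominated by `μ` and invariant, so by ergodicity `ρ = c • μ`,
and nontriviality forces `0 < c < 1`: for every finite family of sets some `A n` is almost
invariant and meets each member in proportion about `c`. The set of such ratios is closed and
stable under `c ↦ 1 - c` and under products (intersect with a second set chosen nearly
independent of the first), and the powers of `1 - c ^ m` come within `c ^ m` of `1/2`; hence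
`1/2` is such a ratio as well. An almost invariant set `A` halving everything then simulates the
fair coin: `Y ⊆ X × Bool` is matched with `{x | (x, 1_A x) ∈ Y}`.
-/

open Function
open scoped symmDiff ENNReal

theorem Set.inter_symmDiff_inter_subset_s14 {X : Type*} (s t u v : Set X) :
    (s ∩ t) ∆ (u ∩ v) ⊆ s ∆ u ∪ t ∆ v := fun x => by
  simp only [Set.mem_symmDiff, Set.mem_inter_iff, Set.mem_union]; tauto

theorem exists_abs_one_sub_pow_sub_half_le {e : ℝ} (he₀ : 0 < e) (he : e < 2⁻¹) :
    ∃ n : ℕ, |(1 - e) ^ n - 2⁻¹| ≤ e := by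
  have hd₀ : 0 < 1 - e := by linarith
  obtain ⟨n, hn₁, hn₂⟩ := exists_nat_pow_near one_le_two ((one_lt_inv₀ hd₀).2 (by linarith))
  rw [inv_pow] at hn₁ hn₂
  have h₁ : 2⁻¹ ≤ (1 - e) ^ n := inv_le_of_inv_le₀ (by positivity) hn₁
  have h₂ : (1 - e) ^ (n + 1) < 2⁻¹ := (lt_inv_comm₀ two_pos (by positivity)).1 hn₂
  have h₃ : (1 - e) ^ n ≤ 1 := pow_le_one₀ hd₀.le (by linarith)
  refine ⟨n + 1, ?_⟩
  rw [abs_sub_comm, abs_of_pos (sub_pos.2 h₂), pow_succ]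
  nlinarith

section Measure

variable {X : Type*} [MeasurableSpace X]

theorem measure_inter_le_add_symmDiff (μ : Measure X) (s t t' : Set X) :
    μ (s ∩ t) ≤ μ (s ∩ t') + μ (t ∆ t') :=
  calc μ (s ∩ t) ≤ μ (s ∩ t') + μ ((s ∩ t) ∆ (s ∩ t')) := tsub_le_iff_left.1 le_measure_symmDiff
    _ ≤ μ (s ∩ t') + μ (t ∆ t') := by
      rw [← Set.inter_symmDiff_distrib_left]; gcongr; exact Set.inter_subset_right

theorem abs_measureReal_sub_le_measureReal_symmDiff (μ : Measure X) [IsFiniteMeasure μ]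
    (s t : Set X) : |μ.real s - μ.real t| ≤ μ.real (s ∆ t) :=
  abs_sub_le_iff.2 ⟨le_trans le_measureReal_sdiff (measureReal_mono fun _ => .inl),
    le_trans le_measureReal_sdiff (measureReal_mono fun _ => .inr)⟩

theorem exists_le_forall_tendsto_ultrafilter {ι : Type*} (U : Ultrafilter ι) {μ : Measure X}
    [IsFiniteMeasure μ] {ν : ι → Measure X} (hν : ∀ i, ν i ≤ μ) :
    ∃ ρ ≤ μ, ∀ s, MeasurableSet s → Tendsto (fun i => ν i s) U (𝓝 (ρ s)) := by
  set m : Set X → ENNReal := fun s => (U.map fun i => ν i s).lim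
  have hm (s : Set X) : Tendsto (fun i => ν i s) U (𝓝 (m s)) := (U.map _).le_nhds_lim
  have hmμ (s : Set X) : m s ≤ μ s := le_of_tendsto' (hm s) fun i => Measure.le_iff'.1 (hν i) s
  have hm_empty : m ∅ = 0 := tendsto_nhds_unique (hm ∅) (by simp)
  have hC : IsSetRing {s : Set X | MeasurableSet s} :=
    ⟨.empty, fun _ _ => .union, fun _ _ => .diff⟩
  have hadd {s t : Set X} (_ : MeasurableSet s) (ht : MeasurableSet t) (hst : Disjoint s t) :
      m (s ∪ t) = m s + m t :=
    tendsto_nhds_unique (hm _) (by simpa only [measure_union hst ht] using (hm s).add (hm t))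
  -- domination by `μ` makes the finitely additive `m` continuous at `∅`, hence σ-additive
  have hcont ⦃t : ℕ → Set X⦄ (ht : ∀ n, MeasurableSet (t n)) (hanti : Antitone t)
      (hempty : ⋂ n, t n = ∅) : Tendsto (fun n => m (t n)) atTop (𝓝 0) := by
    have hμt : Tendsto (μ ∘ t) atTop (𝓝 0) := by
      simpa [hempty] using tendsto_measure_iInter_atTop (μ := μ)
        (fun n => (ht n).nullMeasurableSet) hanti ⟨0, measure_ne_top μ _⟩
    exact tendsto_of_tendsto_of_tendsto_of_le_of_le tendsto_const_nhds hμt (fun _ => zero_le)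
      fun n => hmμ (t n)
  have hσ : ∀ ⦃s : ℕ → Set X⦄, (∀ i, MeasurableSet (s i)) → Pairwise (Disjoint on s) →
      m (⋃ i, s i) = ∑' i, m (s i) := fun s hs hdisj =>
    addContent_iUnion_eq_sum_of_tendsto_zero hC (hC.addContent_of_union m hm_empty hadd)
      (fun s _ => ((hmμ s).trans_lt (measure_lt_top μ s)).ne) hcont hs (.iUnion hs) hdisj
  refine ⟨Measure.ofMeasurable (fun s _ => m s) hm_empty hσ, Measure.le_iff.2 fun s hs => ?_,
    fun s hs => ?_⟩
  · rw [Measure.ofMeasurable_apply s hs]; exact hmμ s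
  · rw [Measure.ofMeasurable_apply s hs]; exact hm s

end Measure

namespace IsPMPAction

variable {Γ X : Type*} [Group Γ] [MeasurableSpace X] {μ : Measure X} {f : Γ → X → X}

theorem apply_inv_apply (hf : IsPMPAction f μ) (γ : Γ) (x : X) : f γ⁻¹ (f γ x) = x := by
  rw [← hf.2.2, inv_mul_cancel, hf.2.1]

theorem apply_apply_inv (hf : IsPMPAction f μ) (γ : Γ) (x : X) : f γ (f γ⁻¹ x) = x := by
  simpa using hf.apply_inv_apply γ⁻¹ x

def toMeasurableEquiv (hf : IsPMPAction f μ) (γ : Γ) : X ≃ᵐ X where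
  toFun := f γ
  invFun := f γ⁻¹
  left_inv := hf.apply_inv_apply γ
  right_inv := hf.apply_apply_inv γ
  measurable_toFun := (hf.1 γ).measurable
  measurable_invFun := (hf.1 γ⁻¹).measurable

theorem bijective (hf : IsPMPAction f μ) (γ : Γ) : Bijective (f γ) :=
  (hf.toMeasurableEquiv γ).bijective

theorem measurableSet_image (hf : IsPMPAction f μ) (γ : Γ) {s : Set X} (hs : MeasurableSet s) :
    MeasurableSet (f γ '' s) :=
  (hf.toMeasurableEquiv γ).measurableSet_image.2 hs

theorem preimage_preimage (hf : IsPMPAction f μ) (γ δ : Γ) (s : Set X) :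
    f δ ⁻¹' (f γ ⁻¹' s) = f (γ * δ) ⁻¹' s := by
  ext x; simp [hf.2.2]

theorem measurePreserving_of_tendsto [IsFiniteMeasure μ] (hf : IsPMPAction f μ) {A : ℕ → Set X}
    (hA : ∀ n, MeasurableSet (A n)) (hai : AlmostInvariantSeq f μ A) {l : Filter ℕ} [l.NeBot]
    (hl : l ≤ atTop) {ρ : Measure X}
    (hρ : ∀ s, MeasurableSet s → Tendsto (fun n => μ (s ∩ A n)) l (𝓝 (ρ s))) (γ : Γ) :
    MeasurePreserving (f γ) ρ ρ := by
  refine ⟨(hf.1 γ).measurable, Measure.ext fun s hs => ?_⟩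
  rw [Measure.map_apply (hf.1 γ).measurable hs]
  have hpre (n : ℕ) : μ (f γ ⁻¹' s ∩ A n) = μ (s ∩ f γ '' A n) := by
    rw [← (hf.1 γ).measure_preimage (hs.inter (hf.measurableSet_image γ (hA n))).nullMeasurableSet,
      Set.preimage_inter, Set.preimage_image_eq _ (hf.bijective γ).injective]
  have hΔ := (hai γ).mono_left hl
  refine tendsto_nhds_unique ((hρ _ ((hf.1 γ).measurable hs)).congr hpre) ?_
  -- `μ (s ∩ f γ '' A n)` is within `μ ((f γ '' A n) ∆ A n) → 0` of `μ (s ∩ A n)`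
  refine tendsto_of_tendsto_of_tendsto_of_le_of_le
    (by simpa using ENNReal.Tendsto.sub (hρ s hs) hΔ (.inr ENNReal.zero_ne_top))
    (by simpa using (hρ s hs).add hΔ) (fun n => ?_) fun n => measure_inter_le_add_symmDiff μ ..
  rw [tsub_le_iff_right, symmDiff_comm]
  exact measure_inter_le_add_symmDiff μ _ _ _

end IsPMPAction

namespace IsErgodicAction

variable {Γ X : Type*} [Group Γ] [Countable Γ] [MeasurableSpace X] {μ : Measure X}
  [IsProbabilityMeasure μ] {f : Γ → X → X}

theorem ae_mem_or_ae_notMem (herg : IsErgodicAction f μ) (hf : IsPMPAction f μ) {s : Set X}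
    (hs : MeasurableSet s) (hinv : ∀ γ, f γ ⁻¹' s =ᵐ[μ] s) :
    (∀ᵐ x ∂μ, x ∈ s) ∨ ∀ᵐ x ∂μ, x ∉ s := by
  set t := ⋂ γ, f γ ⁻¹' s
  have hts : t =ᵐ[μ] s := by
    simpa only [Set.iInter_const] using Filter.EventuallyEq.countable_iInter hinv
  have ht_inv (δ : Γ) : f δ ⁻¹' t = t := by
    simp only [t, Set.preimage_iInter, hf.preimage_preimage]
    exact (Equiv.mulRight δ).surjective.iInter_comp fun γ => f γ ⁻¹' s
  rcases herg t (.iInter fun γ => (hf.1 γ).measurable hs) ht_inv with h | h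
  · exact .inr (measure_eq_zero_iff_ae_notMem.1 (measure_congr hts ▸ h))
  · refine .inl ?_
    rw [ae_iff, ← Set.compl_def, prob_compl_eq_zero_iff hs, ← measure_congr hts, h]

theorem ae_eq_const_of_ae_eq_comp {Y : Type*} [MeasurableSpace Y] [Nonempty Y]
    [MeasurableSpace.CountablySeparated Y] (herg : IsErgodicAction f μ) (hf : IsPMPAction f μ)
    {g : X → Y} (hg : Measurable g) (hinv : ∀ γ, g ∘ f γ =ᵐ[μ] g) :
    ∃ c, g =ᵐ[μ] const X c :=
  exists_eventuallyEq_const_of_forall_separating MeasurableSet fun U hU =>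
    herg.ae_mem_or_ae_notMem hf (hg hU) fun γ => (hinv γ).fun_comp (· ∈ U)

theorem eq_smul_of_measurePreserving (herg : IsErgodicAction f μ) (hf : IsPMPAction f μ)
    {ρ : Measure X} [IsFiniteMeasure ρ] (hρμ : ρ ≪ μ) (hρ : ∀ γ, MeasurePreserving (f γ) ρ ρ) :
    ρ = ρ Set.univ • μ := by
  obtain ⟨c, hc⟩ := herg.ae_eq_const_of_ae_eq_comp hf (Measure.measurable_rnDeriv ρ μ)
    fun γ => (hρ γ).rnDeriv_comp_aeEq (hf.1 γ)
  have hρc : ρ = c • μ := by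
    rw [← Measure.withDensity_rnDeriv_eq ρ μ hρμ, withDensity_congr_ae hc]
    exact withDensity_const c
  rw [hρc]; simp

end IsErgodicAction

def IsAlmostInvariantRatio {Γ X : Type*} [MeasurableSpace X] (f : Γ → X → X) (μ : Measure X)
    (c : ℝ) : Prop :=
  ∀ Q : Set (Set X), Q.Finite → (∀ q ∈ Q, MeasurableSet q) → ∀ S : Set Γ, S.Finite →
    ∀ η : ℝ, 0 < η → ∃ A, MeasurableSet A ∧ (∀ q ∈ Q, |μ.real (q ∩ A) - c * μ.real q| ≤ η) ∧
      ∀ γ ∈ S, μ.real ((f γ '' A) ∆ A) ≤ η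

theorem isAlmostInvariantRatio_one {Γ X : Type*} [Group Γ] [MeasurableSpace X] {μ : Measure X}
    {f : Γ → X → X} (hf : IsPMPAction f μ) : IsAlmostInvariantRatio f μ 1 :=
  fun _ _ _ _ _ _ hη => ⟨Set.univ, .univ, fun q _ => by simpa using hη.le, fun γ _ => by
    simpa [Set.image_univ_of_surjective (hf.bijective γ).surjective] using hη.le⟩

namespace IsAlmostInvariantRatio

variable {Γ X : Type*} [MeasurableSpace X] {μ : Measure X} {f : Γ → X → X} {c d : ℝ}

theorem one_sub [Group Γ] [IsFiniteMeasure μ] (hf : IsPMPAction f μ)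
    (hc : IsAlmostInvariantRatio f μ c) : IsAlmostInvariantRatio f μ (1 - c) := by
  intro Q hQ hQm S hS η hη
  obtain ⟨A, hA, hAQ, hAS⟩ := hc Q hQ hQm S hS η hη
  refine ⟨Aᶜ, hA.compl, fun q hq => ?_, fun γ hγ => ?_⟩
  · have hsplit := measureReal_inter_add_sdiff (s := q) hA (μ := μ)
    rw [← Set.sdiff_eq, abs_sub_comm]
    convert hAQ q hq using 2
    linarith
  · rw [Set.image_compl_eq (hf.bijective γ), compl_symmDiff_compl]
    exact hAS γ hγ

theorem mul [Group Γ] [IsFiniteMeasure μ] (hf : IsPMPAction f μ)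
    (hc : IsAlmostInvariantRatio f μ c) (hd : IsAlmostInvariantRatio f μ d) (hc₀ : 0 ≤ c)
    (hc₁ : c ≤ 1) : IsAlmostInvariantRatio f μ (c * d) := by
  intro Q hQ hQm S hS η hη
  obtain ⟨A, hA, hAQ, hAS⟩ := hd Q hQ hQm S hS (η / 2) (by positivity)
  obtain ⟨B, hB, hBQ, hBS⟩ := hc ((· ∩ A) '' Q) (hQ.image _)
    (Set.forall_mem_image.2 fun q hq => (hQm q hq).inter hA) S hS (η / 2) (by positivity)
  refine ⟨A ∩ B, hA.inter hB, fun q hq => ?_, fun γ hγ => ?_⟩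
  · have h₁ := hBQ _ (Set.mem_image_of_mem _ hq)
    have h₂ := hAQ q hq
    rw [← Set.inter_assoc]
    calc |μ.real (q ∩ A ∩ B) - c * d * μ.real q|
        = |(μ.real (q ∩ A ∩ B) - c * μ.real (q ∩ A)) + c * (μ.real (q ∩ A) - d * μ.real q)| := by
          ring_nf
      _ ≤ |μ.real (q ∩ A ∩ B) - c * μ.real (q ∩ A)| + c * |μ.real (q ∩ A) - d * μ.real q| := by
          rw [← abs_of_nonneg hc₀, ← abs_mul, abs_of_nonneg hc₀]; exact abs_add_le _ _
      _ ≤ η / 2 + 1 * (η / 2) := by gcongr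
      _ = η := by ring
  · calc μ.real ((f γ '' (A ∩ B)) ∆ (A ∩ B))
        ≤ μ.real ((f γ '' A) ∆ A ∪ (f γ '' B) ∆ B) := by
          rw [Set.image_inter (hf.bijective γ).injective]
          exact measureReal_mono (Set.inter_symmDiff_inter_subset_s14 _ _ _ _)
      _ ≤ μ.real ((f γ '' A) ∆ A) + μ.real ((f γ '' B) ∆ B) := measureReal_union_le _ _
      _ ≤ η := by linarith [hAS γ hγ, hBS γ hγ]

theorem pow [Group Γ] [IsFiniteMeasure μ] (hf : IsPMPAction f μ)
    (hc : IsAlmostInvariantRatio f μ c) (hc₀ : 0 ≤ c) (hc₁ : c ≤ 1) :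
    ∀ n : ℕ, IsAlmostInvariantRatio f μ (c ^ n)
  | 0 => by simpa using isAlmostInvariantRatio_one hf
  | n + 1 => by rw [pow_succ']; exact hc.mul hf (hc.pow hf hc₀ hc₁ n) hc₀ hc₁

theorem of_forall_exists_near [IsProbabilityMeasure μ]
    (h : ∀ ε > 0, ∃ d, IsAlmostInvariantRatio f μ d ∧ |d - c| ≤ ε) :
    IsAlmostInvariantRatio f μ c := by
  intro Q hQ hQm S hS η hη
  obtain ⟨d, hd, hdc⟩ := h (η / 2) (by positivity)
  obtain ⟨A, hA, hAQ, hAS⟩ := hd Q hQ hQm S hS (η / 2) (by positivity)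
  refine ⟨A, hA, fun q hq => ?_, fun γ hγ => (hAS γ hγ).trans (by linarith)⟩
  calc |μ.real (q ∩ A) - c * μ.real q|
      = |(μ.real (q ∩ A) - d * μ.real q) + (d - c) * μ.real q| := by ring_nf
    _ ≤ |μ.real (q ∩ A) - d * μ.real q| + |d - c| * μ.real q := by
        rw [← abs_of_nonneg (measureReal_nonneg (s := q) (μ := μ)), ← abs_mul,
          abs_of_nonneg (measureReal_nonneg (s := q) (μ := μ))]
        exact abs_add_le _ _
    _ ≤ η / 2 + η / 2 * 1 := by gcongr; exacts [hAQ q hq, measureReal_le_one]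
    _ = η := by ring

theorem half [Group Γ] [IsProbabilityMeasure μ] (hf : IsPMPAction f μ)
    (hc : IsAlmostInvariantRatio f μ c) (hc₀ : 0 < c) (hc₁ : c < 1) :
    IsAlmostInvariantRatio f μ 2⁻¹ := by
  refine of_forall_exists_near fun ε hε => ?_
  obtain ⟨m, hm⟩ := exists_pow_lt_of_lt_one (lt_min hε (by norm_num : (0 : ℝ) < 2⁻¹)) hc₁
  have hcm₀ : 0 < c ^ m := pow_pos hc₀ m
  obtain ⟨n, hn⟩ := exists_abs_one_sub_pow_sub_half_le hcm₀ (hm.trans_le (min_le_right _ _))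
  have hd := (hc.pow hf hc₀.le hc₁.le m).one_sub hf
  exact ⟨_, hd.pow hf (by linarith [pow_le_one₀ hc₀.le hc₁.le (n := m)]) (by linarith) n,
    hn.trans (hm.le.trans (min_le_left _ _))⟩

theorem of_tendsto [IsFiniteMeasure μ] {A : ℕ → Set X} (hA : ∀ n, MeasurableSet (A n))
    (hai : AlmostInvariantSeq f μ A) {l : Filter ℕ} [l.NeBot] (hl : l ≤ atTop) {r : ℝ≥0∞}
    (hr : r ≠ ∞) (hlim : ∀ s, MeasurableSet s → Tendsto (fun n => μ (s ∩ A n)) l (𝓝 (r * μ s))) :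
    IsAlmostInvariantRatio f μ r.toReal := by
  intro Q hQ hQm S hS η hη
  have hQ' : ∀ᶠ n in l, ∀ q ∈ Q, |μ.real (q ∩ A n) - r.toReal * μ.real q| ≤ η := by
    refine (eventually_all_finite hQ).2 fun q hq => ?_
    have h := (ENNReal.tendsto_toReal (ENNReal.mul_ne_top hr (measure_ne_top μ q))).comp
      (hlim q (hQm q hq))
    rw [ENNReal.toReal_mul] at h
    exact (Metric.tendsto_nhds.1 h η hη).mono fun n hn => hn.le
  have hS' : ∀ᶠ n in l, ∀ γ ∈ S, μ.real ((f γ '' A n) ∆ A n) ≤ η := by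
    refine (eventually_all_finite hS).2 fun γ _ => ?_
    have h := (ENNReal.tendsto_toReal ENNReal.zero_ne_top).comp ((hai γ).mono_left hl)
    exact h.eventually_le_const (by simpa using hη)
  obtain ⟨n, hnQ, hnS⟩ := (hQ'.and hS').exists
  exact ⟨A n, hA n, hnQ, hnS⟩

end IsAlmostInvariantRatio

theorem exists_isAlmostInvariantRatio_of_not_stronglyErgodic {Γ X : Type*} [Group Γ]
    [Countable Γ] [MeasurableSpace X] {μ : Measure X} [IsProbabilityMeasure μ] {f : Γ → X → X}
    (hf : IsPMPAction f μ) (herg : IsErgodicAction f μ) (hnse : ¬ IsStronglyErgodic f μ) :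
    ∃ c : ℝ, 0 < c ∧ c < 1 ∧ IsAlmostInvariantRatio f μ c := by
  obtain ⟨A, hA, hai, hnt⟩ : ∃ A : ℕ → Set X, (∀ n, MeasurableSet (A n)) ∧
      AlmostInvariantSeq f μ A ∧ ¬ TrivialSeq μ A := by
    by_contra! h
    exact hnse ⟨herg, h⟩
  obtain ⟨U, hU, hUA⟩ : ∃ U : Ultrafilter ℕ, (U : Filter ℕ) ≤ atTop ∧
      ¬ Tendsto (fun n => μ (A n) * (1 - μ (A n))) (U : Filter ℕ) (𝓝 0) := by
    rw [TrivialSeq, tendsto_iff_ultrafilter] at hnt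
    simpa only [not_forall, exists_prop] using hnt
  obtain ⟨ρ, hρμ, hρ⟩ := exists_le_forall_tendsto_ultrafilter U
    fun n => Measure.restrict_le_self (μ := μ) (s := A n)
  replace hρ : ∀ s, MeasurableSet s → Tendsto (fun n => μ (s ∩ A n)) U (𝓝 (ρ s)) :=
    fun s hs => by simpa only [Measure.restrict_apply hs] using hρ s hs
  have := isFiniteMeasure_of_le μ hρμ
  have hρc : ρ = ρ Set.univ • μ := herg.eq_smul_of_measurePreserving hf
    (Measure.absolutelyContinuous_of_le hρμ) (hf.measurePreserving_of_tendsto hA hai hU hρ)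
  set c := ρ Set.univ
  have hc_top : c ≠ ∞ := measure_ne_top ρ _
  have hlim : Tendsto (fun n => μ (A n)) U (𝓝 c) := by simpa using hρ _ .univ
  have hc : c * (1 - c) ≠ 0 := fun h => hUA <| h ▸ ENNReal.Tendsto.mul hlim
    (.inr (ENNReal.sub_ne_top ENNReal.one_ne_top))
    (ENNReal.Tendsto.sub tendsto_const_nhds hlim (.inl ENNReal.one_ne_top)) (.inr hc_top)
  obtain ⟨hc₀, hc₁⟩ := mul_ne_zero_iff.1 hc
  refine ⟨c.toReal, ENNReal.toReal_pos hc₀ hc_top, ?_,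
    IsAlmostInvariantRatio.of_tendsto hA hai hU hc_top fun s hs => ?_⟩
  · rw [ne_eq, tsub_eq_zero_iff_le, not_le] at hc₁
    simpa using (ENNReal.toReal_lt_toReal hc_top ENNReal.one_ne_top).2 hc₁
  · rw [← smul_eq_mul, ← Measure.smul_apply, ← hρc]
    exact hρ s hs

section IndicatorGraph

variable {X : Type*}

open Classical in
noncomputable def indicatorGraph (A : Set X) (x : X) : X × Bool := (x, decide (x ∈ A))

theorem measurable_indicatorGraph [MeasurableSpace X] {A : Set X} (hA : MeasurableSet A) :
    Measurable (indicatorGraph A) :=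
  measurable_id.prodMk (measurable_to_bool (by simpa [Set.preimage] using hA))

theorem preimage_indicatorGraph (A : Set X) (W : Set (X × Bool)) :
    indicatorGraph A ⁻¹' W = ((·, true) ⁻¹' W ∩ A) ∪ ((·, false) ⁻¹' W \ A) := by
  ext x
  by_cases hx : x ∈ A <;> simp [indicatorGraph, hx]

theorem image_preimage_indicatorGraph {φ : X → X} (hφ : Injective φ) (A : Set X)
    (Y : Set (X × Bool)) :
    φ '' (indicatorGraph A ⁻¹' Y) = indicatorGraph (φ '' A) ⁻¹' ((fun p => (φ p.1, p.2)) '' Y) := by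
  classical
  ext x
  have hdec (a : X) : decide (φ a ∈ φ '' A) = decide (a ∈ A) :=
    decide_eq_decide.2 hφ.mem_set_image
  simp only [indicatorGraph, Set.mem_image, Set.mem_preimage, Prod.exists, Prod.mk.injEq]
  constructor
  · rintro ⟨a, ha, rfl⟩
    exact ⟨a, _, ha, rfl, (hdec a).symm⟩
  · rintro ⟨a, b, hab, rfl, rfl⟩
    exact ⟨a, hdec a ▸ hab, rfl⟩

theorem preimage_indicatorGraph_symmDiff_subset (A A' : Set X) (W : Set (X × Bool)) :
    (indicatorGraph A' ⁻¹' W) ∆ (indicatorGraph A ⁻¹' W) ⊆ A' ∆ A := by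
  intro x
  by_cases h : x ∈ A' <;> by_cases h' : x ∈ A <;> simp [indicatorGraph, Set.mem_symmDiff, h, h']

theorem measureReal_prod_half_count [MeasurableSpace X] (μ : Measure X) [IsFiniteMeasure μ]
    {W : Set (X × Bool)} (hW : MeasurableSet W) :
    (μ.prod ((2 : ℝ≥0∞)⁻¹ • Measure.count)).real W =
      2⁻¹ * μ.real ((·, true) ⁻¹' W) + 2⁻¹ * μ.real ((·, false) ⁻¹' W) := by
  rw [measureReal_def, Measure.prod_apply_symm hW, lintegral_fintype]
  simp only [Fintype.sum_bool, Measure.smul_apply, Measure.count_singleton, smul_eq_mul, mul_one]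
  rw [ENNReal.toReal_add (by finiteness) (by finiteness), ENNReal.toReal_mul, ENNReal.toReal_mul]
  simp [Measure.real, mul_comm]

theorem abs_measureReal_image_preimage_indicatorGraph_sub_le [MeasurableSpace X] (μ : Measure X)
    [IsFiniteMeasure μ] {φ : X → X} (hφ : Injective φ) (A : Set X) (Y Y' : Set (X × Bool)) :
    |μ.real (φ '' (indicatorGraph A ⁻¹' Y) ∩ indicatorGraph A ⁻¹' Y') -
      μ.real (indicatorGraph A ⁻¹' ((fun p => (φ p.1, p.2)) '' Y ∩ Y'))| ≤
      μ.real ((φ '' A) ∆ A) := by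
  rw [image_preimage_indicatorGraph hφ, Set.preimage_inter]
  refine (abs_measureReal_sub_le_measureReal_symmDiff μ _ _).trans (measureReal_mono ?_)
  rw [← Set.inter_symmDiff_distrib_right]
  exact Set.inter_subset_left.trans (preimage_indicatorGraph_symmDiff_subset _ _ _)

theorem abs_measureReal_preimage_indicatorGraph_sub_le [MeasurableSpace X] (μ : Measure X)
    [IsFiniteMeasure μ] {A : Set X} (hA : MeasurableSet A) {W : Set (X × Bool)}
    (hW : MeasurableSet W) :
    |μ.real (indicatorGraph A ⁻¹' W) - (μ.prod ((2 : ℝ≥0∞)⁻¹ • Measure.count)).real W| ≤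
      |μ.real ((·, true) ⁻¹' W ∩ A) - 2⁻¹ * μ.real ((·, true) ⁻¹' W)| +
        |μ.real ((·, false) ⁻¹' W ∩ A) - 2⁻¹ * μ.real ((·, false) ⁻¹' W)| := by
  have hsplit := measureReal_inter_add_sdiff (μ := μ) (s := (·, false) ⁻¹' W) hA
  rw [preimage_indicatorGraph, measureReal_union
    ((Set.disjoint_sdiff_right (s := A)).mono_left Set.inter_subset_right)
    ((measurable_prodMk_right hW).diff hA), measureReal_prod_half_count μ hW]
  refine le_of_eq_of_le ?_ (abs_sub _ _)
  congr 1
  linarith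

end IndicatorGraph

theorem weaklyContains_prod_two_points_of_isAlmostInvariantRatio_half {Γ X : Type*} [Group Γ]
    [MeasurableSpace X] {μ : Measure X} [IsFiniteMeasure μ] {f : Γ → X → X}
    (hf : IsPMPAction f μ) (h : IsAlmostInvariantRatio f μ 2⁻¹) :
    WeaklyContains f μ (fun γ (p : X × Bool) => (f γ p.1, p.2))
      (μ.prod ((2 : ℝ≥0∞)⁻¹ • Measure.count)) := by
  intro n Y hY S ε hε
  have hgY (γ : Γ) (i : Fin n) : MeasurableSet ((fun p : X × Bool => (f γ p.1, p.2)) '' Y i) :=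
    ((hf.toMeasurableEquiv γ).prodCongr (.refl Bool)).measurableSet_image.2 (hY i)
  set Q := Set.range fun p : S × Fin n × Fin n × Bool =>
    (·, p.2.2.2) ⁻¹' ((fun q : X × Bool => (f p.1 q.1, q.2)) '' Y p.2.1 ∩ Y p.2.2.1)
  have hQm : ∀ q ∈ Q, MeasurableSet q :=
    Set.forall_mem_range.2 fun p => measurable_prodMk_right ((hgY _ _).inter (hY _))
  obtain ⟨A, hA, hAQ, hAS⟩ := h Q (Set.finite_range _) hQm S S.finite_toSet (ε / 4) (by positivity)
  refine ⟨fun i => indicatorGraph A ⁻¹' Y i, fun i => measurable_indicatorGraph hA (hY i),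
    fun i j γ hγ => ?_⟩
  have h₁ := abs_measureReal_image_preimage_indicatorGraph_sub_le μ (hf.bijective γ).injective A
    (Y i) (Y j)
  have h₂ := abs_measureReal_preimage_indicatorGraph_sub_le μ hA ((hgY γ i).inter (hY j))
  have h_true := hAQ _ ⟨(⟨γ, hγ⟩, i, j, true), rfl⟩
  have h_false := hAQ _ ⟨(⟨γ, hγ⟩, i, j, false), rfl⟩
  have hΔ := hAS γ hγ
  change |μ.real _ - (μ.prod _).real _| < ε
  calc _ ≤ _ := abs_sub_le _ (μ.real (indicatorGraph A ⁻¹'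
        ((fun q : X × Bool => (f γ q.1, q.2)) '' Y i ∩ Y j))) _
    _ < ε := by linarith

theorem weaklyContains_prod_two_points_of_not_stronglyErgodic_general
    {Γ : Type*} [Group Γ] [Countable Γ]
    {X : Type*} [MeasurableSpace X]
    (μ : Measure X) [IsProbabilityMeasure μ]
    (f : Γ → X → X) (hf : IsPMPAction f μ) (herg : IsErgodicAction f μ)
    (hnse : ¬ IsStronglyErgodic f μ) :
    WeaklyContains f μ (fun γ (p : X × Bool) => (f γ p.1, p.2))
      (μ.prod ((2 : ENNReal)⁻¹ • Measure.count)) := by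
  obtain ⟨c, hc₀, hc₁, hc⟩ := exists_isAlmostInvariantRatio_of_not_stronglyErgodic hf herg hnse
  exact weaklyContains_prod_two_points_of_isAlmostInvariantRatio_half hf (hc.half hf hc₀ hc₁)

/-- **Claim.** If an ergodic p.m.p. action `f` is not strongly ergodic, then `f` weakly
contains `f × b`, the diagonal product of `f` with the trivial action on two points with
equal mass. -/
theorem weaklyContains_prod_two_points_of_not_stronglyErgodic
    {Γ : Type*} [Group Γ] [Countable Γ]
    {X : Type*} [MeasurableSpace X] [StandardBorelSpace X]
    (μ : Measure X) [IsProbabilityMeasure μ]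
    (f : Γ → X → X) (hf : IsPMPAction f μ) (herg : IsErgodicAction f μ)
    (hnse : ¬ IsStronglyErgodic f μ) :
    WeaklyContains f μ (fun γ (p : X × Bool) => (f γ p.1, p.2))
      (μ.prod ((2 : ENNReal)⁻¹ • Measure.count)) :=
  weaklyContains_prod_two_points_of_not_stronglyErgodic_general μ f hf herg hnse
end
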